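/- arXiv:2204.11927 — 3 statements merged into one kernel-verified Lean document; each statement's English description precedes it below -/
import Mathlib

section
/- For finite graphs G and H, the fractional chromatic number of the OR-product satisfies χ_f(G * H) = χ_f(G) · χ_f(H); in particular χ_f(G^n) = χ_f(G)^n for the n-th OR-power. -/
def IsBFoldColoring {V : Type*} (G : SimpleGraph V) (a b : ℕ)
    (c : V → Finset (Fin a)) : Prop :=
  (∀ v, (c v).card = b) ∧ ∀ v w, G.Adj v w → Disjoint (c v) (c w)

def HasFoldColoring {V : Type*} (G : SimpleGraph V) (a b : ℕ) : Prop :=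
  ∃ c : V → Finset (Fin a), IsBFoldColoring G a b c

/-- The `b`-fold chromatic number `χ_b(G)`. -/
noncomputable def foldChromatic {V : Type*} (G : SimpleGraph V) (b : ℕ) : ℕ :=
  sInf {a | HasFoldColoring G a b}

/-- The fractional chromatic number `χ_f(G) = inf_b χ_b(G)/b`. -/
noncomputable def fracChromatic {V : Type*} (G : SimpleGraph V) : ℝ :=
  ⨅ b : ℕ+, (foldChromatic G (b : ℕ) : ℝ) / ((b : ℕ) : ℝ)
/-- The OR-product (co-normal product) of two simple graphs. -/
def orProd {α β : Type*} (G : SimpleGraph α) (H : SimpleGraph β) :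
    SimpleGraph (α × β) where
  Adj x y := G.Adj x.1 y.1 ∨ H.Adj x.2 y.2
  symm := by
    constructor
    intro x y h
    cases h with
    | inl h => exact Or.inl h.symm
    | inr h => exact Or.inr h.symm
  loopless := by
    constructor
    intro x h
    cases h with
    | inl h => exact G.irrefl h
    | inr h => exact H.irrefl h
/-- The n-th OR-power of a simple graph: tuples are adjacent iff at least one
coordinate pair is adjacent. -/
def orPow {V : Type*} (G : SimpleGraph V) (n : ℕ) : SimpleGraph (Fin n → V) where
  Adj x y := ∃ i, G.Adj (x i) (y i)
  symm := by
    constructor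
    intro x y ⟨i, h⟩
    exact ⟨i, h.symm⟩
  loopless := by
    constructor
    intro x ⟨i, h⟩
    exact G.irrefl h

/-! The upper bound `χ_f(G * H) ≤ χ_f(G) χ_f(H)` comes from products of fold colourings: if `c₁`
is an `a₁:b₁` colouring of `G` and `c₂` an `a₂:b₂` colouring of `H`, then
`(g, h) ↦ c₁ g ×ˢ c₂ h` is an `a₁a₂:b₁b₂` colouring of `G * H`.

For the lower bound take an `a:b` colouring `c` of `G * H`. For each `g`, `h ↦ c (g, h)` is a
`b`-fold colouring of `H`, so the set `S g` of colours it uses has at least `k = χ_b(H)` elements;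
and `S g`, `S g'` are disjoint whenever `g ~ g'`, since then every `(g, h)` is adjacent to every
`(g', h')`. Shrinking each `S g` to `k` colours gives an `a:k` colouring of `G`, whence
`a ≥ χ_f(G) k ≥ χ_f(G) χ_f(H) b`. -/

open Finset

section FoldColoring

variable {V W C : Type*} {G : SimpleGraph V} {a b : ℕ}

theorem hasFoldColoring_of_subset (S : Finset C) (c : V → Finset C) (hS : ∀ v, c v ⊆ S)
    (hcard : ∀ v, #(c v) = b) (hdisj : ∀ v w, G.Adj v w → Disjoint (c v) (c w)) :
    HasFoldColoring G #S b := by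
  classical
  refine ⟨fun v => ((c v).subtype (· ∈ S)).map S.equivFin.toEmbedding, fun v => ?_,
    fun v w hvw => ?_⟩
  · rw [card_map, card_subtype, filter_true_of_mem (hS v), hcard v]
  · rw [disjoint_map, disjoint_left]
    intro x hxv hxw
    exact disjoint_left.mp (hdisj v w hvw) (mem_subtype.mp hxv) (mem_subtype.mp hxw)

theorem HasFoldColoring.comap {H : SimpleGraph W} (f : G →g H) (h : HasFoldColoring H a b) :
    HasFoldColoring G a b := by
  obtain ⟨c, hcard, hdisj⟩ := h
  exact ⟨c ∘ f, fun v => hcard (f v), fun v w hvw => hdisj _ _ (f.map_adj hvw)⟩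

theorem SimpleGraph.Iso.hasFoldColoring_iff {H : SimpleGraph W} (e : G ≃g H) :
    HasFoldColoring G a b ↔ HasFoldColoring H a b :=
  ⟨HasFoldColoring.comap e.symm.toHom, HasFoldColoring.comap e.toHom⟩

theorem hasFoldColoring_card_mul [Fintype V] (G : SimpleGraph V) (b : ℕ) :
    HasFoldColoring G (Fintype.card V * b) b := by
  classical
  simpa using hasFoldColoring_of_subset (G := G) (univ : Finset (V × Fin b))
    (fun v => {v} ×ˢ univ) (fun _ => subset_univ _) (fun _ => by simp)
    (fun v w hvw => disjoint_product.mpr (.inl (disjoint_singleton.mpr hvw.ne)))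

theorem hasFoldColoring_foldChromatic [Fintype V] (G : SimpleGraph V) (b : ℕ) :
    HasFoldColoring G (foldChromatic G b) b :=
  Nat.sInf_mem (s := {a | HasFoldColoring G a b}) ⟨_, hasFoldColoring_card_mul G b⟩

theorem HasFoldColoring.foldChromatic_le (h : HasFoldColoring G a b) : foldChromatic G b ≤ a :=
  Nat.sInf_le h

end FoldColoring

section FracChromatic

variable {V W : Type*} {G : SimpleGraph V} {a b : ℕ}

theorem fracChromatic_le_div (G : SimpleGraph V) (b : ℕ+) :
    fracChromatic G ≤ foldChromatic G b / (b : ℕ) :=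
  ciInf_le ⟨0, by rintro _ ⟨b, rfl⟩; positivity⟩ b

theorem fracChromatic_nonneg (G : SimpleGraph V) : 0 ≤ fracChromatic G :=
  le_ciInf fun _ => by positivity

theorem HasFoldColoring.fracChromatic_mul_le (h : HasFoldColoring G a b) :
    fracChromatic G * b ≤ a := by
  obtain rfl | hb := b.eq_zero_or_pos
  · simp
  have hb' : (0 : ℝ) < b := by exact_mod_cast hb
  calc fracChromatic G * b ≤ foldChromatic G b / b * b :=
        by gcongr; exact fracChromatic_le_div G ⟨b, hb⟩
    _ = foldChromatic G b := div_mul_cancel₀ _ hb'.ne'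
    _ ≤ a := by exact_mod_cast h.foldChromatic_le

theorem SimpleGraph.Iso.fracChromatic_eq {H : SimpleGraph W} (e : G ≃g H) :
    fracChromatic G = fracChromatic H := by
  simp only [fracChromatic, foldChromatic, e.hasFoldColoring_iff]

end FracChromatic

section OrProd

variable {α β : Type*} {G : SimpleGraph α} {H : SimpleGraph β}

theorem HasFoldColoring.orProd {a₁ b₁ a₂ b₂ : ℕ} (h₁ : HasFoldColoring G a₁ b₁)
    (h₂ : HasFoldColoring H a₂ b₂) : HasFoldColoring (_root_.orProd G H) (a₁ * a₂) (b₁ * b₂) := by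
  obtain ⟨c₁, hcard₁, hdisj₁⟩ := h₁
  obtain ⟨c₂, hcard₂, hdisj₂⟩ := h₂
  simpa using hasFoldColoring_of_subset (G := _root_.orProd G H) univ (fun x => c₁ x.1 ×ˢ c₂ x.2)
    (fun _ => subset_univ _) (fun x => by rw [card_product, hcard₁, hcard₂])
    (fun x y hxy => disjoint_product.mpr (hxy.imp (hdisj₁ _ _) (hdisj₂ _ _)))

theorem HasFoldColoring.of_orProd [Fintype β] {a b : ℕ} (h : HasFoldColoring (_root_.orProd G H) a b) :
    HasFoldColoring G a (foldChromatic H b) := by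
  classical
  obtain ⟨c, hcard, hdisj⟩ := h
  let S : α → Finset (Fin a) := fun g => univ.biUnion fun h => c (g, h)
  have hS : ∀ g, foldChromatic H b ≤ #(S g) := fun g =>
    HasFoldColoring.foldChromatic_le <| hasFoldColoring_of_subset (S g) (fun h => c (g, h))
      (fun h => subset_biUnion_of_mem (fun h => c (g, h)) (mem_univ h)) (fun h => hcard _)
      (fun h h' hh' => hdisj _ _ (Or.inr hh'))
  have hSdisj : ∀ g g', G.Adj g g' → Disjoint (S g) (S g') := fun g g' hgg' => by
    simp only [S, disjoint_biUnion_left, disjoint_biUnion_right]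
    exact fun h _ h' _ => hdisj _ _ (Or.inl hgg')
  choose T hTS hTcard using fun g => exists_subset_card_eq (hS g)
  exact ⟨T, hTcard, fun g g' hgg' => (hSdisj g g' hgg').mono (hTS g) (hTS g')⟩

variable [Fintype α] [Fintype β]

theorem fracChromatic_orProd_le (G : SimpleGraph α) (H : SimpleGraph β) :
    fracChromatic (orProd G H) ≤ fracChromatic G * fracChromatic H := by
  conv_rhs => rw [fracChromatic, Real.iInf_mul_of_nonneg (fracChromatic_nonneg H)]
  refine le_ciInf fun b₁ => ?_
  conv_rhs => rw [fracChromatic, Real.mul_iInf_of_nonneg (by positivity)]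
  refine le_ciInf fun b₂ => (fracChromatic_le_div _ (b₁ * b₂)).trans ?_
  have hfold := ((hasFoldColoring_foldChromatic G b₁).orProd
    (hasFoldColoring_foldChromatic H b₂)).foldChromatic_le
  rw [div_mul_div_comm, PNat.mul_coe, Nat.cast_mul]
  gcongr
  exact_mod_cast hfold

theorem le_fracChromatic_orProd (G : SimpleGraph α) (H : SimpleGraph β) :
    fracChromatic G * fracChromatic H ≤ fracChromatic (orProd G H) := by
  refine le_ciInf fun b => (le_div_iff₀ (by positivity)).mpr ?_
  have hfold := hasFoldColoring_foldChromatic (orProd G H) b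
  calc fracChromatic G * fracChromatic H * (b : ℕ)
      = fracChromatic G * (fracChromatic H * (b : ℕ)) := mul_assoc _ _ _
    _ ≤ fracChromatic G * foldChromatic H b :=
        mul_le_mul_of_nonneg_left (hasFoldColoring_foldChromatic H b).fracChromatic_mul_le
          (fracChromatic_nonneg G)
    _ ≤ foldChromatic (orProd G H) b := hfold.of_orProd.fracChromatic_mul_le

end OrProd

section OrPow

variable {V : Type*} (G : SimpleGraph V)

def orPowOneIso : orPow G 1 ≃g G where
  toEquiv := Equiv.funUnique (Fin 1) V
  map_rel_iff' := ⟨fun h => ⟨0, h⟩, fun ⟨i, h⟩ => by rwa [Subsingleton.elim i 0] at h⟩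

def orPowSuccIso (n : ℕ) : orPow G (n + 1) ≃g orProd G (orPow G n) where
  toEquiv := (Fin.consEquiv fun _ => V).symm
  map_rel_iff' {x y} := by
    change G.Adj (x 0) (y 0) ∨ (∃ i : Fin n, G.Adj (x i.succ) (y i.succ)) ↔ ∃ i, G.Adj (x i) (y i)
    exact (Fin.exists_fin_succ (P := fun i => G.Adj (x i) (y i))).symm

theorem fracChromatic_orPow [Fintype V] {n : ℕ} (hn : 1 ≤ n) :
    fracChromatic (orPow G n) = fracChromatic G ^ n := by
  induction n, hn using Nat.le_induction with
  | base => rw [(orPowOneIso G).fracChromatic_eq, pow_one]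
  | succ n _ ih =>
    rw [(orPowSuccIso G n).fracChromatic_eq, le_antisymm (fracChromatic_orProd_le _ _)
      (le_fracChromatic_orProd _ _), ih, pow_succ']

end OrPow

/-- The fractional chromatic number is multiplicative under the OR-product;
in particular `χ_f(G^n) = χ_f(G)^n` for the n-th OR-power. -/
theorem fracChromatic_orProd {α β : Type*} [Fintype α] [Fintype β] :
    (∀ (G : SimpleGraph α) (H : SimpleGraph β),
      fracChromatic (orProd G H) = fracChromatic G * fracChromatic H) ∧
    (∀ (G : SimpleGraph α) (n : ℕ), 1 ≤ n →
      fracChromatic (orPow G n) = fracChromatic G ^ n) :=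
  ⟨fun G H => (fracChromatic_orProd_le G H).antisymm (le_fracChromatic_orProd G H),
    fun G _ hn => fracChromatic_orPow G hn⟩
end

section
/- For any finite graph G, the n-th root of the chromatic number of the n-th OR-power converges: lim_{n→∞} χ(G^n)^{1/n} = inf_n χ(G^n)^{1/n} = χ_f(G). -/
open Finset Filter

namespace ChromAux

open scoped Classical Pointwise
set_option linter.unusedSectionVars false

variable {V : Type*} [Fintype V]

/-- Covering lemma: a family of independent sets covering each vertex `b` times yields
a `b`-fold coloring with `card ι` colors. -/
lemma cov {G : SimpleGraph V} {ι : Type*} [Fintype ι] (S : ι → Finset V)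
    (hind : ∀ j, ∀ v ∈ S j, ∀ w ∈ S j, ¬ G.Adj v w)
    {b : ℕ} (hcov : ∀ v, b ≤ (univ.filter fun j => v ∈ S j).card) :
    HasFoldColoring G (Fintype.card ι) b := by
  classical
  let e := Fintype.equivFin ι
  have key : ∀ v : V, ∃ t ⊆ (univ.filter fun j => v ∈ S j).image e, t.card = b := by
    intro v
    refine Finset.exists_subset_card_eq ?_
    rw [Finset.card_image_of_injective _ e.injective]
    exact hcov v
  choose c hsub hcard using key
  refine ⟨c, hcard, ?_⟩
  intro v w hvw
  rw [Finset.disjoint_left]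
  intro x hxv hxw
  obtain ⟨j, hj, rfl⟩ := Finset.mem_image.1 (hsub v hxv)
  obtain ⟨j', hj', hee⟩ := Finset.mem_image.1 (hsub w hxw)
  have : j' = j := e.injective hee
  subst this
  exact hind j' v (by simpa using hj) w (by simpa using hj') hvw

lemma hasFold_singletons (G : SimpleGraph V) (b : ℕ) :
    HasFoldColoring G (Fintype.card V * b) b := by
  classical
  have h := cov (G := G) (ι := V × Fin b) (S := fun p => {p.1})
    (by intro j v hv w hw hadj
        simp only [Finset.mem_singleton] at hv hw
        subst hv; subst hw; exact G.irrefl hadj)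
    (b := b)
    (by intro v
        have : (univ.filter fun j : V × Fin b => v ∈ ({j.1} : Finset V)) =
            {v} ×ˢ (univ : Finset (Fin b)) := by
          ext ⟨x, y⟩
          simp [eq_comm]
        rw [this]
        simp)
  simpa [Fintype.card_prod] using h

lemma foldChromatic_le {G : SimpleGraph V} {a b : ℕ} (h : HasFoldColoring G a b) :
    foldChromatic G b ≤ a := Nat.sInf_le h

lemma exists_foldColoring (G : SimpleGraph V) (b : ℕ) :
    HasFoldColoring G (foldChromatic G b) b := by
  have : {a | HasFoldColoring G a b}.Nonempty := ⟨_, hasFold_singletons G b⟩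
  exact Nat.sInf_mem this

lemma le_foldChromatic [Nonempty V] (G : SimpleGraph V) (b : ℕ) :
    b ≤ foldChromatic G b := by
  obtain ⟨c, hcard, -⟩ := exists_foldColoring G b
  inhabit V
  calc b = (c default).card := (hcard default).symm
    _ ≤ (univ : Finset (Fin (foldChromatic G b))).card := Finset.card_le_card (Finset.subset_univ _)
    _ = foldChromatic G b := by simp

lemma hasFold_one_iff {G : SimpleGraph V} {a : ℕ} :
    HasFoldColoring G a 1 ↔ ∃ f : V → Fin a, ∀ v w, G.Adj v w → f v ≠ f w := by
  constructor
  · rintro ⟨c, hcard, hdisj⟩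
    have h1 : ∀ v, ∃ x, c v = {x} := fun v => Finset.card_eq_one.1 (hcard v)
    choose f hf using h1
    refine ⟨f, fun v w hvw heq => ?_⟩
    have := hdisj v w hvw
    rw [hf v, hf w, heq, Finset.disjoint_singleton_left] at this
    simp at this
  · rintro ⟨f, hf⟩
    exact ⟨fun v => {f v}, fun v => rfl, fun v w hvw => by
      rw [Finset.disjoint_singleton_left, Finset.mem_singleton]
      exact fun h => hf v w hvw h⟩


lemma one_le_chi_one [Nonempty V] (G : SimpleGraph V) : 1 ≤ foldChromatic G 1 :=
  le_foldChromatic G 1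

/-- Submultiplicativity of the chromatic number of OR-powers. -/
lemma orPow_submul (G : SimpleGraph V) (m n : ℕ) :
    foldChromatic (orPow G (m + n)) 1 ≤
      foldChromatic (orPow G m) 1 * foldChromatic (orPow G n) 1 := by
  classical
  obtain ⟨f1, hf1⟩ := hasFold_one_iff.1 (exists_foldColoring (orPow G m) 1)
  obtain ⟨f2, hf2⟩ := hasFold_one_iff.1 (exists_foldColoring (orPow G n) 1)
  refine foldChromatic_le (hasFold_one_iff.2 ⟨?_, ?_⟩)
  · exact fun z => finProdFinEquiv
      (f1 (fun i => z (Fin.castAdd n i)), f2 (fun i => z (Fin.natAdd m i)))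
  · intro z z' hzz' heq
    obtain ⟨i, hi⟩ := hzz'
    have hpair := finProdFinEquiv.injective heq
    have h1 := congrArg Prod.fst hpair
    have h2 := congrArg Prod.snd hpair
    have hi' : i = finSumFinEquiv (finSumFinEquiv.symm i) := (Equiv.apply_symm_apply _ _).symm
    rcases hs : finSumFinEquiv.symm i with i' | i'
    · rw [hs, finSumFinEquiv_apply_left] at hi'
      subst hi'
      exact hf1 _ _ ⟨i', hi⟩ h1
    · rw [hs, finSumFinEquiv_apply_right] at hi'
      subst hi'
      exact hf2 _ _ ⟨i', hi⟩ h2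

/-- Product construction: fold colorings extend to OR-powers. -/
lemma orPow_fold {G : SimpleGraph V} {a b : ℕ} (h : HasFoldColoring G a b) (n : ℕ) :
    HasFoldColoring (orPow G n) (a ^ n) (b ^ n) := by
  classical
  obtain ⟨c, hcard, hdisj⟩ := h
  refine ⟨fun x => (Fintype.piFinset fun i => c (x i)).image finFunctionFinEquiv, ?_, ?_⟩
  · intro x
    rw [Finset.card_image_of_injective _ finFunctionFinEquiv.injective,
      Fintype.card_piFinset]
    simp [hcard]
  · intro x y hxy
    obtain ⟨i, hi⟩ := hxy
    rw [Finset.disjoint_left]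
    intro g hgx hgy
    obtain ⟨g1, hg1, rfl⟩ := Finset.mem_image.1 hgx
    obtain ⟨g2, hg2, heq⟩ := Finset.mem_image.1 hgy
    have : g2 = g1 := finFunctionFinEquiv.injective heq
    subst this
    have h1 : g2 i ∈ c (x i) := Fintype.mem_piFinset.1 hg1 i
    have h2 : g2 i ∈ c (y i) := Fintype.mem_piFinset.1 hg2 i
    exact (Finset.disjoint_left.1 (hdisj _ _ hi)) h1 h2

/-- The greedy covering bound: with `m` independent sets covering every vertex `b` times,
`T` colors suffice as soon as `card V * (m-b)^T < m^T`. -/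
lemma greedy [Nonempty V] (H : SimpleGraph V) {m b : ℕ} (hb : 0 < b)
    (S : Fin m → Finset V) (hind : ∀ j, ∀ v ∈ S j, ∀ w ∈ S j, ¬ H.Adj v w)
    (hcov : ∀ v, b ≤ (univ.filter fun j => v ∈ S j).card)
    {T : ℕ} (hT : Fintype.card V * (m - b) ^ T < m ^ T) :
    HasFoldColoring H T 1 := by
  classical
  inhabit V
  have hbm : b ≤ m := by
    calc b ≤ (univ.filter fun j => (default : V) ∈ S j).card := hcov default
      _ ≤ (univ : Finset (Fin m)).card := Finset.card_le_card (Finset.filter_subset _ _)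
      _ = m := by simp
  have m0 : 0 < m := lt_of_lt_of_le hb hbm
  have main : ∀ t : ℕ, ∃ (U : Finset V) (js : Fin t → Fin m),
      U.card * m ^ t ≤ Fintype.card V * (m - b) ^ t ∧
      ∀ x, x ∉ U → ∃ i, x ∈ S (js i) := by
    intro t
    induction t with
    | zero => exact ⟨univ, Fin.elim0, by simp [Finset.card_univ],
        fun x hx => absurd (mem_univ x) hx⟩
    | succ t ih =>
      obtain ⟨U, js, hcard, hcov'⟩ := ih
      obtain ⟨j0, -, hj0⟩ := Finset.exists_max_image (univ : Finset (Fin m))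
        (fun j => (U ∩ S j).card) ⟨⟨0, m0⟩, mem_univ _⟩
      have havg : b * U.card ≤ m * (U ∩ S j0).card := by
        have h1 : ∑ j : Fin m, (U ∩ S j).card
            = ∑ x ∈ U, (univ.filter fun j => x ∈ S j).card := by
          have e1 : ∀ j : Fin m, (U ∩ S j).card = ∑ x ∈ U, if x ∈ S j then 1 else 0 := by
            intro j
            rw [← Finset.filter_mem_eq_inter, Finset.card_filter]
          have e2 : ∀ x : V, (univ.filter fun j => x ∈ S j).card
              = ∑ j : Fin m, if x ∈ S j then 1 else 0 := by
            intro x; rw [Finset.card_filter]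
          simp only [e1, e2]
          exact Finset.sum_comm
        have h2 : b * U.card ≤ ∑ x ∈ U, (univ.filter fun j => x ∈ S j).card := by
          calc b * U.card = ∑ _x ∈ U, b := by rw [Finset.sum_const, smul_eq_mul, mul_comm]
            _ ≤ _ := Finset.sum_le_sum (fun x _ => hcov x)
        have h3 : ∑ j : Fin m, (U ∩ S j).card ≤ m * (U ∩ S j0).card := by
          simpa [mul_comm] using
            Finset.sum_le_card_nsmul univ (fun j => (U ∩ S j).card) ((U ∩ S j0).card)
              (fun j _ => hj0 j (mem_univ j))
        omega
      have hui := Finset.card_sdiff_add_card_inter U (S j0)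
      have hstep : (U \ S j0).card * m ≤ U.card * (m - b) := by
        have havg' : (b : ℤ) * U.card ≤ m * (U ∩ S j0).card := by exact_mod_cast havg
        have hui' : ((U \ S j0).card : ℤ) + (U ∩ S j0).card = U.card := by exact_mod_cast hui
        zify [hbm]
        nlinarith [havg', hui']
      refine ⟨U \ S j0, Fin.snoc js j0, ?_, ?_⟩
      · calc (U \ S j0).card * m ^ (t + 1) = ((U \ S j0).card * m) * m ^ t := by ring
          _ ≤ (U.card * (m - b)) * m ^ t := Nat.mul_le_mul_right _ hstep
          _ = (U.card * m ^ t) * (m - b) := by ring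
          _ ≤ (Fintype.card V * (m - b) ^ t) * (m - b) := Nat.mul_le_mul_right _ hcard
          _ = Fintype.card V * (m - b) ^ (t + 1) := by ring
      · intro x hx
        by_cases hxU : x ∈ U
        · have hxS : x ∈ S j0 := by
            by_contra hxS
            exact hx (Finset.mem_sdiff.2 ⟨hxU, hxS⟩)
          exact ⟨Fin.last t, by rw [Fin.snoc_last]; exact hxS⟩
        · obtain ⟨i, hi⟩ := hcov' x hxU
          exact ⟨Fin.castSucc i, by rw [Fin.snoc_castSucc]; exact hi⟩
  obtain ⟨U, js, hcard, hcov'⟩ := main T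
  have hU : U = ∅ := by
    by_contra h
    have h1 : 1 ≤ U.card := Finset.card_pos.2 (Finset.nonempty_of_ne_empty h)
    have h2 : m ^ T ≤ U.card * m ^ T := Nat.le_mul_of_pos_left _ h1
    omega
  have hcov'' : ∀ x : V, ∃ i, x ∈ S (js i) := fun x => hcov' x (by simp [hU])
  choose g hg using hcov''
  refine hasFold_one_iff.2 ⟨g, ?_⟩
  intro v w hvw heq
  exact hind (js (g w)) v (heq ▸ hg v) w (hg w) hvw


/-- Rational approximation of a probability vector from below. -/
lemma ratApprox {α : Type*} [DecidableEq α] (B : Finset α) (w : α → ℝ)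
    (h0 : ∀ a ∈ B, 0 ≤ w a) (h1 : ∑ a ∈ B, w a = 1) {ε : ℝ} (hε : 0 < ε) :
    ∃ (D : ℕ) (k : α → ℕ), 0 < D ∧ ∑ a ∈ B, k a = D ∧
      ∀ a ∈ B, w a - ε ≤ (k a : ℝ) / D := by
  have hBne : B.Nonempty := by
    rcases B.eq_empty_or_nonempty with h | h
    · rw [h, Finset.sum_empty] at h1; norm_num at h1
    · exact h
  obtain ⟨a₀, ha₀⟩ := hBne
  have hex : ∃ D : ℕ, 0 < D ∧ 1 / (D:ℝ) ≤ ε := by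
    obtain ⟨D0, hD0⟩ := exists_nat_ge (1 / ε)
    refine ⟨D0 + 1, Nat.succ_pos _, ?_⟩
    have hp : (0:ℝ) < (D0:ℝ) + 1 := by positivity
    rw [div_le_iff₀ (by exact_mod_cast hp)]
    have h2 : 1 / ε ≤ ((D0:ℝ) + 1) := hD0.trans (by linarith)
    have h3 : 1 / ε * ε ≤ ε * ((D0:ℝ) + 1) := by nlinarith
    rw [div_mul_cancel₀ 1 hε.ne'] at h3
    exact_mod_cast h3
  obtain ⟨D, hDpos, hDε⟩ := hex
  have hDR : (0:ℝ) < D := by exact_mod_cast hDpos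
  have hfl : ∀ x ∈ B.erase a₀, (⌊w x * D⌋₊ : ℝ) ≤ w x * D := fun x hx =>
    Nat.floor_le (mul_nonneg (h0 x (Finset.mem_of_mem_erase hx)) hDR.le)
  have herase : w a₀ + ∑ x ∈ B.erase a₀, w x = 1 := (Finset.add_sum_erase B w ha₀).trans h1
  have hs2 : (∑ x ∈ B.erase a₀, (⌊w x * D⌋₊:ℝ)) ≤ (1 - w a₀) * D := by
    calc ∑ x ∈ B.erase a₀, (⌊w x * D⌋₊ : ℝ) ≤ ∑ x ∈ B.erase a₀, w x * D :=
          Finset.sum_le_sum hfl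
      _ = (∑ x ∈ B.erase a₀, w x) * D := by rw [Finset.sum_mul]
      _ = (1 - w a₀) * D := by rw [show ∑ x ∈ B.erase a₀, w x = 1 - w a₀ by linarith]
  have hsle : (∑ x ∈ B.erase a₀, ⌊w x * D⌋₊) ≤ D := by
    have hw0 : 0 ≤ w a₀ := h0 a₀ ha₀
    have : ((∑ x ∈ B.erase a₀, ⌊w x * D⌋₊ : ℕ) : ℝ) ≤ D := by
      push_cast
      nlinarith
    exact_mod_cast this
  set s := ∑ x ∈ B.erase a₀, ⌊w x * D⌋₊ with hs
  refine ⟨D, Function.update (fun a => ⌊w a * D⌋₊) a₀ (D - s), hDpos, ?_, ?_⟩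
  · rw [← Finset.add_sum_erase _ _ ha₀, Function.update_self]
    have heq : ∑ x ∈ B.erase a₀, Function.update (fun a => ⌊w a * D⌋₊) a₀ (D - s) x = s := by
      refine Finset.sum_congr rfl (fun x hx => ?_)
      rw [Function.update_of_ne (Finset.ne_of_mem_erase hx)]
    rw [heq]
    omega
  · intro a ha
    by_cases haa : a = a₀
    · subst haa
      rw [Function.update_self, le_div_iff₀ hDR]
      have hcast : ((D - s : ℕ) : ℝ) = (D:ℝ) - s := by
        push_cast [hsle]; ring
      rw [hcast]
      have hsR : (s:ℝ) ≤ (1 - w a) * D := by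
        rw [hs]; push_cast; exact hs2
      nlinarith
    · rw [Function.update_of_ne haa, le_div_iff₀ hDR]
      have h3 : w a * D - 1 ≤ (⌊w a * D⌋₊ : ℝ) := (Nat.sub_one_lt_floor _).le
      have h4 : 1 ≤ ε * D := by
        rw [div_le_iff₀ hDR] at hDε; linarith
      nlinarith [h3, h4]



section Limits

lemma tendsto_log_nat_succ_div :
    Tendsto (fun k : ℕ => Real.log ((k:ℝ) + 1) / (k:ℝ)) atTop (nhds 0) := by
  have h := Real.tendsto_pow_log_div_mul_add_atTop 1 (-1) 1 one_ne_zero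
  have h2 : Tendsto (fun k : ℕ => ((k:ℝ) + 1)) atTop atTop :=
    tendsto_atTop_add_const_right _ 1 tendsto_natCast_atTop_atTop
  have h3 := h.comp h2
  have heq : (fun k : ℕ => Real.log ((k:ℝ) + 1) ^ 1 / (1 * ((k:ℝ) + 1) + -1))
      = fun k : ℕ => Real.log ((k:ℝ) + 1) / (k:ℝ) := by
    funext k
    rw [pow_one]
    norm_num
  rwa [show ((fun x => Real.log x ^ 1 / (1 * x + -1)) ∘ fun k : ℕ => ((k:ℝ) + 1))
      = (fun k : ℕ => Real.log ((k:ℝ) + 1) ^ 1 / (1 * ((k:ℝ) + 1) + -1)) from rfl, heq] at h3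

lemma tendsto_root_linear {c : ℝ} (hc : 0 ≤ c) :
    Tendsto (fun n : ℕ => ((n:ℝ) * c + 1) ^ ((n:ℝ)⁻¹)) atTop (nhds 1) := by
  have key : Tendsto (fun n : ℕ => Real.log ((n:ℝ) * c + 1) * (n:ℝ)⁻¹) atTop (nhds 0) := by
    have hg2 : Tendsto (fun n : ℕ => Real.log (c + 1) / (n:ℝ) + Real.log ((n:ℝ) + 1) / (n:ℝ))
        atTop (nhds 0) := by
      have := (tendsto_const_div_atTop_nhds_zero_nat (Real.log (c + 1))).add
        tendsto_log_nat_succ_div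
      simpa using this
    refine tendsto_of_tendsto_of_tendsto_of_le_of_le' tendsto_const_nhds hg2 ?_ ?_
    · filter_upwards [eventually_ge_atTop 1] with n hn
      have h1 : (1:ℝ) ≤ (n:ℝ) * c + 1 := by
        have : (0:ℝ) ≤ (n:ℝ) * c := by positivity
        linarith
      exact mul_nonneg (Real.log_nonneg h1) (by positivity)
    · filter_upwards [eventually_ge_atTop 1] with n hn
      have hnR : (1:ℝ) ≤ (n:ℝ) := by exact_mod_cast hn
      have h1 : (0:ℝ) < (n:ℝ) * c + 1 := by positivity
      have h2 : (n:ℝ) * c + 1 ≤ (c + 1) * ((n:ℝ) + 1) := by nlinarith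
      have h3 : Real.log ((n:ℝ) * c + 1) ≤ Real.log (c + 1) + Real.log ((n:ℝ) + 1) := by
        rw [← Real.log_mul (by linarith) (by linarith)]
        exact Real.log_le_log h1 h2
      have h4 : (0:ℝ) < (n:ℝ)⁻¹ := by positivity
      calc Real.log ((n:ℝ) * c + 1) * (n:ℝ)⁻¹
          ≤ (Real.log (c + 1) + Real.log ((n:ℝ) + 1)) * (n:ℝ)⁻¹ := by nlinarith
        _ = Real.log (c + 1) / (n:ℝ) + Real.log ((n:ℝ) + 1) / (n:ℝ) := by
            rw [add_mul, div_eq_mul_inv, div_eq_mul_inv]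
  have hexp := (Real.continuous_exp.tendsto 0).comp key
  rw [Real.exp_zero] at hexp
  refine hexp.congr (fun n => ?_)
  have h1 : (0:ℝ) < (n:ℝ) * c + 1 := by positivity
  rw [Function.comp_apply, Real.rpow_def_of_pos h1]

end Limits

section Dual

/-- Independence of a finset of vertices. -/
def Ind (G : SimpleGraph V) (I : Finset V) : Prop := ∀ v ∈ I, ∀ w ∈ I, ¬ G.Adj v w

/-- Indicator vector of a finset. -/
noncomputable def chiVec (I : Finset V) : V → ℝ := fun v => if v ∈ I then 1 else 0

/-- The finset of indicator vectors of independent sets. -/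
noncomputable def indB (G : SimpleGraph V) : Finset (V → ℝ) :=
  (univ.filter fun I => Ind G I).image chiVec

/-- The fractional-coloring polytope. -/
noncomputable def Pset (G : SimpleGraph V) : Set (V → ℝ) := convexHull ℝ ↑(indB G)

/-- Minimum coordinate. -/
noncomputable def phi [Nonempty V] (x : V → ℝ) : ℝ := univ.inf' Finset.univ_nonempty x

/-- The LP value `s* = max_{x ∈ P} min_v x v` (as a sup). -/
noncomputable def sStar (G : SimpleGraph V) [Nonempty V] : ℝ := sSup (phi '' Pset G)

noncomputable def recover (z : V → ℝ) : Finset V := univ.filter fun v => z v = 1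

variable {G : SimpleGraph V}

lemma chiVec_mem_indB {I : Finset V} (hI : Ind G I) : chiVec I ∈ indB G :=
  Finset.mem_image_of_mem _ (Finset.mem_filter.2 ⟨Finset.mem_univ _, hI⟩)

lemma mem_indB {z : V → ℝ} (hz : z ∈ indB G) : ∃ I, Ind G I ∧ chiVec I = z := by
  obtain ⟨I, hI, rfl⟩ := Finset.mem_image.1 hz
  exact ⟨I, (Finset.mem_filter.1 hI).2, rfl⟩

lemma recover_chiVec {I : Finset V} : recover (chiVec I) = I := by
  ext v
  simp only [recover, chiVec, Finset.mem_filter, Finset.mem_univ, true_and]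
  by_cases h : v ∈ I <;> simp [h]

lemma chiVec_empty : chiVec (∅ : Finset V) = 0 := by
  funext v; simp [chiVec]

lemma zero_mem_Pset : (0 : V → ℝ) ∈ Pset G := by
  have h : chiVec (∅ : Finset V) ∈ indB G :=
    chiVec_mem_indB (by intro v hv; simp at hv)
  rw [chiVec_empty] at h
  exact subset_convexHull ℝ _ h

lemma Pset_box {x : V → ℝ} (hx : x ∈ Pset G) : ∀ v, 0 ≤ x v ∧ x v ≤ 1 := by
  have hsub : (↑(indB G) : Set (V → ℝ)) ⊆ {y : V → ℝ | ∀ v, 0 ≤ y v ∧ y v ≤ 1} := by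
    intro z hz
    obtain ⟨I, -, rfl⟩ := mem_indB hz
    intro v
    by_cases h : v ∈ I <;> simp [chiVec, h]
  have hconv : Convex ℝ {y : V → ℝ | ∀ v, 0 ≤ y v ∧ y v ≤ 1} := by
    intro p hp q hq s t hs ht hst
    intro v
    obtain ⟨h1, h2⟩ := hp v
    obtain ⟨h3, h4⟩ := hq v
    constructor
    · have : 0 ≤ s * p v + t * q v := by positivity
      simpa using this
    · have : s * p v + t * q v ≤ 1 := by nlinarith
      simpa using this
  exact convexHull_min hsub hconv hx

section Nonempty
variable [Nonempty V]

lemma phi_le_apply (x : V → ℝ) (v : V) : phi x ≤ x v := Finset.inf'_le _ (Finset.mem_univ v)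

lemma bddAbove_phi_Pset : BddAbove (phi '' Pset G) := by
  refine ⟨1, ?_⟩
  rintro y ⟨x, hx, rfl⟩
  exact (phi_le_apply x (Classical.arbitrary V)).trans (Pset_box hx _).2

lemma nonempty_phi_Pset : (phi '' Pset G).Nonempty :=
  ⟨phi 0, Set.mem_image_of_mem _ zero_mem_Pset⟩

lemma phi_le_sStar {x : V → ℝ} (hx : x ∈ Pset G) : phi x ≤ sStar G :=
  le_csSup bddAbove_phi_Pset (Set.mem_image_of_mem _ hx)

/-- Weak LP bound: any `b`-fold `a`-coloring witnesses `b/a ≤ s*`. -/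
lemma weakLP {a b : ℕ} (h : HasFoldColoring G a b) (hb : 0 < b) :
    (b : ℝ) / a ≤ sStar G := by
  obtain ⟨c, hcard, hdisj⟩ := h
  have ha : 0 < a := by
    have h1 : b ≤ a := by
      calc b = (c (Classical.arbitrary V)).card := (hcard _).symm
        _ ≤ (univ : Finset (Fin a)).card := Finset.card_le_card (Finset.subset_univ _)
        _ = a := by simp
    omega
  have haR : (0:ℝ) < a := by exact_mod_cast ha
  set z : Fin a → (V → ℝ) := fun j => chiVec (univ.filter fun v => j ∈ c v) with hz
  have hindCl : ∀ j : Fin a, Ind G (univ.filter fun v => j ∈ c v) := by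
    intro j v hv w hw hadj
    rw [Finset.mem_filter] at hv hw
    exact Finset.disjoint_left.1 (hdisj v w hadj) hv.2 hw.2
  have hy : univ.centerMass (fun _ : Fin a => (1:ℝ)) z ∈ Pset G := by
    refine Finset.centerMass_mem_convexHull _ (fun i _ => zero_le_one) ?_ ?_
    · simp [haR]
    · intro i _
      exact chiVec_mem_indB (hindCl i)
  have hyv : ∀ v, (univ.centerMass (fun _ : Fin a => (1:ℝ)) z) v = (b:ℝ) / a := by
    intro v
    rw [Finset.centerMass]
    have h1 : ∑ _i : Fin a, (1:ℝ) = a := by simp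
    have h2 : (∑ i : Fin a, (1:ℝ) • z i) v = (b:ℝ) := by
      rw [Finset.sum_apply]
      have h3 : ∀ i : Fin a, ((1:ℝ) • z i) v = if i ∈ c v then (1:ℝ) else 0 := by
        intro i
        simp only [one_smul, hz, chiVec, Finset.mem_filter, Finset.mem_univ, true_and]
      rw [Finset.sum_congr rfl (fun i _ => h3 i)]
      rw [Finset.sum_ite_mem]
      simp [hcard v]
    simp only [Pi.smul_apply, smul_eq_mul, h1, h2]
    rw [div_eq_inv_mul]
  refine le_trans ?_ (phi_le_sStar hy)
  refine Finset.le_inf' _ _ (fun v _ => ?_)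
  rw [hyv v]

lemma sStar_pos : 0 < sStar G := by
  have h := weakLP (G := G) (hasFold_singletons G 1) one_pos
  refine lt_of_lt_of_le ?_ h
  have : (0:ℝ) < Fintype.card V := by
    exact_mod_cast Fintype.card_pos
  positivity


lemma ind_recover {z : V → ℝ} (hz : z ∈ indB G) : Ind G (recover z) := by
  obtain ⟨I, hI, rfl⟩ := mem_indB hz
  rwa [recover_chiVec]

lemma apply_eq_ite_recover {z : V → ℝ} (hz : z ∈ indB G) (v : V) :
    z v = if v ∈ recover z then 1 else 0 := by
  obtain ⟨I, hI, rfl⟩ := mem_indB hz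
  rw [recover_chiVec]
  rfl

/-- Primal approximation: any `r < s*` is beaten by an actual fold coloring. -/
lemma key2' {r : ℝ} (hr : 0 < r) (hrs : r < sStar G) :
    ∃ bb : ℕ, 0 < bb ∧ (foldChromatic G bb : ℝ) / bb ≤ 1 / r := by
  classical
  obtain ⟨y, ⟨x, hxP, rfl⟩, hrx⟩ := exists_lt_of_lt_csSup (nonempty_phi_Pset (G := G)) hrs
  have hx' := hxP
  rw [Pset, Finset.convexHull_eq] at hx'
  obtain ⟨w, hw0, hw1, hwx⟩ := hx'
  have hxe : ∀ v, x v = ∑ z ∈ indB G, w z * z v := by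
    intro v
    rw [← hwx, Finset.centerMass_eq_of_sum_1 _ id hw1]
    rw [Finset.sum_apply]
    rfl
  set M := ((indB G).card : ℝ) with hM
  have hM0 : 0 ≤ M := by positivity
  set ε := (phi x - r) / (M + 1) with hε'
  have hphix : r < phi x := hrx
  have hε : 0 < ε := by
    apply div_pos (by linarith) (by linarith)
  have hMε : M * ε ≤ phi x - r := by
    rw [hε']
    rw [div_eq_mul_inv, ← mul_assoc]
    rw [mul_comm M (phi x - r), mul_assoc]
    have h2 : M * (M + 1)⁻¹ ≤ 1 := by
      rw [mul_inv_le_iff₀ (by linarith)]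
      linarith
    nlinarith
  obtain ⟨D, k, hD, hkD, hk⟩ := ratApprox (indB G) w hw0 hw1 hε
  have hDR : (0:ℝ) < D := by exact_mod_cast hD
  have hcardι : Fintype.card (Σ z : {z : (V → ℝ) // z ∈ indB G}, Fin (k z.1)) = D := by
    rw [Fintype.card_sigma]
    simp only [Fintype.card_fin]
    rw [Finset.sum_coe_sort (indB G) k]
    exact hkD
  set S : (Σ z : {z : (V → ℝ) // z ∈ indB G}, Fin (k z.1)) → Finset V :=
    fun p => recover p.1.1 with hS
  have hSind : ∀ p : (Σ z : {z : (V → ℝ) // z ∈ indB G}, Fin (k z.1)), ∀ v ∈ S p, ∀ u ∈ S p, ¬ G.Adj v u := fun p => ind_recover p.1.2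
  set bb := ⌈(D:ℝ) * r⌉₊ with hbb
  have hbbpos : 0 < bb := Nat.ceil_pos.2 (by positivity)
  have hcount : ∀ v, ((univ.filter fun p : (Σ z : {z : (V → ℝ) // z ∈ indB G}, Fin (k z.1)) => v ∈ S p).card : ℕ)
      = ∑ z ∈ indB G, if v ∈ recover z then k z else 0 := by
    intro v
    rw [Finset.card_filter]
    rw [← Finset.univ_sigma_univ, Finset.sum_sigma]
    have h1 : ∀ z : {z : (V → ℝ) // z ∈ indB G},
        (∑ _j : Fin (k z.1), if v ∈ recover z.1 then 1 else 0)
          = if v ∈ recover z.1 then k z.1 else 0 := by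
      intro z
      by_cases h : v ∈ recover z.1 <;> simp [h]
    rw [Finset.sum_congr rfl (fun z _ => h1 z)]
    exact Finset.sum_coe_sort (indB G) (fun z => if v ∈ recover z then k z else 0)
  have hcov : ∀ v, bb ≤ (univ.filter fun p : (Σ z : {z : (V → ℝ) // z ∈ indB G}, Fin (k z.1)) => v ∈ S p).card := by
    intro v
    rw [hbb, Nat.ceil_le]
    rw [hcount v]
    push_cast
    have step1 : ∑ z ∈ indB G, (if v ∈ recover z then (k z:ℝ) else 0)
        ≥ ∑ z ∈ indB G, ((if v ∈ recover z then w z else 0) - ε) * D := by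
      refine Finset.sum_le_sum (fun z hz => ?_)
      by_cases h : v ∈ recover z
      · simp only [if_pos h]
        have h2 : w z - ε ≤ (k z : ℝ) / D := hk z hz
        have h3 := mul_le_mul_of_nonneg_right h2 hDR.le
        rwa [div_mul_cancel₀ _ hDR.ne'] at h3
      · simp only [if_neg h]
        nlinarith [hε, hDR]
    have step2 : ∑ z ∈ indB G, ((if v ∈ recover z then w z else 0) - ε) * D
        = (x v - M * ε) * D := by
      rw [← Finset.sum_mul]
      congr 1
      rw [Finset.sum_sub_distrib, Finset.sum_const]
      congr 1
      · rw [hxe v]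
        refine Finset.sum_congr rfl (fun z hz => ?_)
        rw [apply_eq_ite_recover hz v]
        by_cases h : v ∈ recover z <;> simp [h]
      · rw [hM]
        rw [nsmul_eq_mul]
    have step3 : r * 1 ≤ (x v - M * ε) := by
      have h4 : phi x ≤ x v := phi_le_apply x v
      linarith
    calc (D:ℝ) * r = r * D := by ring
      _ ≤ (x v - M * ε) * D := by nlinarith
      _ = ∑ z ∈ indB G, ((if v ∈ recover z then w z else 0) - ε) * D := step2.symm
      _ ≤ ∑ z ∈ indB G, (if v ∈ recover z then (k z : ℝ) else 0) := step1
  have hfold : HasFoldColoring G D bb := by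
    have h := cov S hSind hcov
    rwa [hcardι] at h
  have hchi : foldChromatic G bb ≤ D := foldChromatic_le hfold
  refine ⟨bb, hbbpos, ?_⟩
  have hbbR : (0:ℝ) < bb := by exact_mod_cast hbbpos
  have h1 : (D:ℝ) * r ≤ bb := Nat.le_ceil _
  calc (foldChromatic G bb : ℝ) / bb ≤ (D:ℝ) / bb := by
        have : (foldChromatic G bb : ℝ) ≤ (D:ℝ) := by exact_mod_cast hchi
        gcongr
    _ ≤ (D:ℝ) / ((D:ℝ) * r) := by
        apply div_le_div_of_nonneg_left hDR.le (by positivity) h1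
    _ = 1 / r := by
        field_simp


/-- Strong duality via separation: there are fractional-clique weights of value
nearly `1/s*`. -/
lemma keyClique {ε : ℝ} (hε : 0 < ε) :
    ∃ w : V → ℝ, (∀ v, 0 ≤ w v) ∧ (∀ I : Finset V, Ind G I → ∑ v ∈ I, w v ≤ 1) ∧
      1 / (sStar G + ε) < ∑ v, w v := by
  classical
  set N : Set (V → ℝ) := {y | ∀ v, y v ≤ 0} with hN
  have hNconv : Convex ℝ N := by
    intro p hp q hq s t hs ht hst v
    have h1 := hp v
    have h2 := hq v
    have h3 : s * p v + t * q v ≤ 0 := by nlinarith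
    simpa using h3
  have hNclosed : IsClosed N := by
    have hNi : N = ⋂ v, {y : V → ℝ | y v ≤ 0} := by
      ext y; simp [hN, Set.mem_iInter]
    rw [hNi]
    exact isClosed_iInter (fun v => isClosed_le (continuous_apply v) continuous_const)
  have hPcomp : IsCompact (Pset G) := by
    rw [Pset]
    exact Set.Finite.isCompact_convexHull (𝕜 := ℝ) (indB G).finite_toSet
  have hC : IsClosed (Pset G + N) := hNclosed.add_left_of_isCompact hPcomp
  have hCconv : Convex ℝ (Pset G + N) := (convex_convexHull ℝ _).add hNconv
  have hxnot : (fun _ : V => sStar G + ε) ∉ Pset G + N := by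
    rintro ⟨p, hp, y, hy, hpy⟩
    have hple : ∀ v, sStar G + ε ≤ p v := by
      intro v
      have h1 : p v + y v = sStar G + ε := congrFun hpy v
      have h2 := hy v
      linarith
    have h2 : sStar G + ε ≤ phi p := Finset.le_inf' _ _ (fun v _ => hple v)
    have h3 : phi p ≤ sStar G := phi_le_sStar hp
    linarith
  obtain ⟨f, u, hfu, hux⟩ := geometric_hahn_banach_closed_point hCconv hC hxnot
  set w' : V → ℝ := fun v => f (Pi.single v 1) with hw'
  have hfexp : ∀ z : V → ℝ, f z = ∑ v, z v * w' v := by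
    intro z
    have hz : z = ∑ v, z v • (Pi.single v (1:ℝ) : V → ℝ) := by
      conv_lhs => rw [← Finset.univ_sum_single z]
      refine Finset.sum_congr rfl (fun v _ => ?_)
      rw [← Pi.single_smul, smul_eq_mul, mul_one]
    conv_lhs => rw [hz]
    rw [map_sum]
    refine Finset.sum_congr rfl (fun v _ => ?_)
    rw [map_smul, smul_eq_mul]
  have hmemC : ∀ p ∈ Pset G, p ∈ Pset G + N := by
    intro p hp
    refine ⟨p, hp, 0, by intro v; simp [hN], add_zero p⟩
  have hu0 : 0 < u := by
    have h0 := hfu 0 (hmemC 0 zero_mem_Pset)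
    rwa [map_zero] at h0
  have hw0 : ∀ v, 0 ≤ w' v := by
    intro v
    by_contra hneg
    push_neg at hneg
    have hwneg : 0 < -w' v := by linarith
    set t : ℝ := (u + 1) / (-w' v) with ht
    have htpos : 0 < t := by positivity
    have hmem : (-t) • (Pi.single v (1:ℝ) : V → ℝ) ∈ Pset G + N := by
      refine ⟨0, zero_mem_Pset, (-t) • (Pi.single v (1:ℝ) : V → ℝ), ?_, zero_add _⟩
      intro u'
      by_cases h : u' = v
      · subst h
        simp only [Pi.smul_apply, Pi.single_eq_same, smul_eq_mul, mul_one]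
        linarith
      · simp [Pi.single_eq_of_ne h]
    have hlt := hfu _ hmem
    rw [map_smul, smul_eq_mul] at hlt
    have hfw : f (Pi.single v 1) = w' v := rfl
    rw [hfw] at hlt
    have heq : -t * w' v = u + 1 := by
      rw [ht, neg_mul, div_mul_eq_mul_div, div_neg, neg_neg, mul_div_assoc, div_self hneg.ne, mul_one]
    rw [heq] at hlt
    linarith
  have hIneq : ∀ I : Finset V, Ind G I → ∑ v ∈ I, w' v < u := by
    intro I hI
    have h1 := hfu (chiVec I) (hmemC _ (subset_convexHull ℝ _ (chiVec_mem_indB hI)))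
    rw [hfexp] at h1
    have h2 : ∑ v, chiVec I v * w' v = ∑ v ∈ I, w' v := by
      have h3 : ∀ v, chiVec I v * w' v = if v ∈ I then w' v else 0 := by
        intro v
        by_cases h : v ∈ I <;> simp [chiVec, h]
      rw [Finset.sum_congr rfl (fun v _ => h3 v), Finset.sum_ite_mem, Finset.univ_inter]
    rwa [h2] at h1
  have hx2 : u < (sStar G + ε) * ∑ v, w' v := by
    have h1 := hux
    rw [hfexp, ← Finset.mul_sum] at h1
    exact h1
  have hsε : 0 < sStar G + ε := by
    have := sStar_pos (G := G)
    linarith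
  have hsum_pos : 0 < ∑ v, w' v := by
    by_contra hle
    push_neg at hle
    nlinarith
  refine ⟨fun v => w' v / u, fun v => div_nonneg (hw0 v) hu0.le, ?_, ?_⟩
  · intro I hI
    rw [← Finset.sum_div, div_le_one hu0]
    exact (hIneq I hI).le
  · rw [← Finset.sum_div, div_lt_div_iff₀ hsε hu0, one_mul]
    linarith [hx2]


/-- Weak duality: fractional clique weights lower-bound chromatic numbers of OR-powers. -/
lemma cliquePow {w : V → ℝ} (hw0 : ∀ v, 0 ≤ w v)
    (hw1 : ∀ I : Finset V, Ind G I → ∑ v ∈ I, w v ≤ 1) (n : ℕ) :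
    (∑ v, w v) ^ n ≤ (foldChromatic (orPow G n) 1 : ℝ) := by
  classical
  set a := foldChromatic (orPow G n) 1 with ha
  obtain ⟨fc, hf⟩ := hasFold_one_iff.1 (exists_foldColoring (orPow G n) 1)
  have hexp : (∑ v, w v) ^ n = ∑ x : Fin n → V, ∏ i, w (x i) := by
    have h1 : (∑ v, w v) ^ n = ∏ _i : Fin n, (∑ v, w v) := by
      rw [Finset.prod_const]
      simp
    rw [h1, Finset.prod_univ_sum]
    rw [Fintype.piFinset_univ]
  have hfib : ∀ j : Fin a, ∑ x ∈ univ.filter (fun x => fc x = j), ∏ i, w (x i) ≤ 1 := by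
    intro j
    set Jf : Fin n → Finset V := fun i => (univ.filter (fun x => fc x = j)).image (fun x => x i)
      with hJf
    have hJind : ∀ i, Ind G (Jf i) := by
      intro i v hv v' hv' hadj
      obtain ⟨x, hx, rfl⟩ := Finset.mem_image.1 hv
      obtain ⟨y, hy, rfl⟩ := Finset.mem_image.1 hv'
      have hfx : fc x = j := (Finset.mem_filter.1 hx).2
      have hfy : fc y = j := (Finset.mem_filter.1 hy).2
      exact hf x y ⟨i, hadj⟩ (hfx.trans hfy.symm)
    have hsub : univ.filter (fun x => fc x = j) ⊆ Fintype.piFinset Jf := by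
      intro x hx
      rw [Fintype.mem_piFinset]
      intro i
      exact Finset.mem_image_of_mem _ hx
    calc ∑ x ∈ univ.filter (fun x => fc x = j), ∏ i, w (x i)
        ≤ ∑ x ∈ Fintype.piFinset Jf, ∏ i, w (x i) :=
          Finset.sum_le_sum_of_subset_of_nonneg hsub
            (fun x _ _ => Finset.prod_nonneg (fun i _ => hw0 _))
      _ = ∏ i, ∑ v ∈ Jf i, w v := (Finset.prod_univ_sum Jf (fun _ v => w v)).symm
      _ ≤ 1 := Finset.prod_le_one
          (fun i _ => Finset.sum_nonneg (fun v _ => hw0 v))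
          (fun i _ => hw1 _ (hJind i))
  calc (∑ v, w v) ^ n = ∑ x : Fin n → V, ∏ i, w (x i) := hexp
    _ = ∑ j : Fin a, ∑ x ∈ univ.filter (fun x => fc x = j), ∏ i, w (x i) :=
        (Finset.sum_fiberwise univ fc _).symm
    _ ≤ ∑ _j : Fin a, (1:ℝ) := Finset.sum_le_sum (fun j _ => hfib j)
    _ = a := by simp

lemma key3 (n : ℕ) (hn : 1 ≤ n) :
    1 / sStar G ≤ (foldChromatic (orPow G n) 1 : ℝ) ^ ((n:ℝ)⁻¹) := by
  have hchi1 : 1 ≤ foldChromatic (orPow G n) 1 := one_le_chi_one (orPow G n)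
  have hchiR : (0:ℝ) < (foldChromatic (orPow G n) 1 : ℝ) := by exact_mod_cast hchi1
  set F := (foldChromatic (orPow G n) 1 : ℝ) ^ ((n:ℝ)⁻¹) with hFdef
  have hF0 : 0 < F := Real.rpow_pos_of_pos hchiR _
  by_contra hlt
  push_neg at hlt
  have hs := sStar_pos (G := G)
  have hε : 0 < 1 / F - sStar G := by
    have h1 : sStar G < 1 / F := by
      rw [lt_div_iff₀ hF0]
      have h2 := mul_lt_mul_of_pos_left hlt hs
      rwa [mul_one_div, div_self hs.ne'] at h2
    linarith
  obtain ⟨w, hw0, hw1, hwv⟩ := keyClique (G := G) hε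
  have h1 : sStar G + (1 / F - sStar G) = 1 / F := by ring
  rw [h1, one_div_one_div] at hwv
  have h2 := cliquePow hw0 hw1 n
  have h3 : F ^ n = (foldChromatic (orPow G n) 1 : ℝ) := by
    rw [hFdef, ← Real.rpow_natCast ((foldChromatic (orPow G n) 1 : ℝ) ^ ((n:ℝ)⁻¹)) n,
      ← Real.rpow_mul hchiR.le, inv_mul_cancel₀ (Nat.cast_ne_zero.mpr (by omega) : (n:ℝ) ≠ 0),
      Real.rpow_one]
  have h4 : F ^ n < (∑ v, w v) ^ n :=
    pow_lt_pow_left₀ hwv hF0.le (by omega)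
  rw [h3] at h4
  linarith

lemma fracChromatic_bddBelow :
    BddBelow (Set.range fun b : ℕ+ => (foldChromatic G (b:ℕ) : ℝ) / ((b:ℕ):ℝ)) := by
  refine ⟨0, ?_⟩
  rintro y ⟨b, rfl⟩
  positivity

lemma fracChromatic_le_term (b : ℕ+) :
    fracChromatic G ≤ (foldChromatic G (b:ℕ) : ℝ) / ((b:ℕ):ℝ) :=
  ciInf_le fracChromatic_bddBelow b

lemma one_le_fracChromatic : 1 ≤ fracChromatic G := by
  refine le_ciInf (fun b => ?_)
  have hb : (0:ℝ) < ((b:ℕ):ℝ) := by exact_mod_cast b.pos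
  rw [le_div_iff₀ hb, one_mul]
  exact_mod_cast le_foldChromatic G (b:ℕ)

lemma fracChromatic_le_inv_sStar : fracChromatic G ≤ 1 / sStar G := by
  by_contra h
  push_neg at h
  have hs := sStar_pos (G := G)
  have hf_pos : (0:ℝ) < fracChromatic G := lt_of_lt_of_le one_pos one_le_fracChromatic
  have hkey : 1 < fracChromatic G * sStar G := by
    have h2 := mul_lt_mul_of_pos_right h hs
    rwa [one_div_mul_cancel hs.ne'] at h2
  set r := (1 / fracChromatic G + sStar G) / 2 with hrdef
  have hfi : 1 / fracChromatic G < sStar G := by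
    rw [div_lt_iff₀ hf_pos]
    nlinarith
  have hr0 : 0 < r := by positivity
  have hrs : r < sStar G := by rw [hrdef]; linarith
  have hrf : 1 / fracChromatic G < r := by rw [hrdef]; linarith
  obtain ⟨bb, hbbpos, hle⟩ := key2' (G := G) hr0 hrs
  have h2 : fracChromatic G ≤ (foldChromatic G bb : ℝ) / bb := by
    have := fracChromatic_le_term (G := G) ⟨bb, hbbpos⟩
    simpa using this
  have h3 : 1 / r < fracChromatic G := by
    rw [div_lt_iff₀ hr0]
    rw [div_lt_iff₀ hf_pos] at hrf
    nlinarith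
  linarith

lemma fracChromatic_le_root (n : ℕ) (hn : 1 ≤ n) :
    fracChromatic G ≤ (foldChromatic (orPow G n) 1 : ℝ) ^ ((n:ℝ)⁻¹) :=
  (fracChromatic_le_inv_sStar (G := G)).trans (key3 n hn)

end Nonempty
end Dual


section Upper
variable [Nonempty V]

lemma chi_orPow_le_ceil (G : SimpleGraph V) (bp : ℕ+) (n : ℕ) (hn : 1 ≤ n) :
    foldChromatic (orPow G n) 1 ≤
      ⌈((n:ℝ) * (Real.log (Fintype.card V) + 1)) *
        ((foldChromatic G (bp:ℕ) : ℝ) / ((bp:ℕ):ℝ)) ^ n⌉₊ := by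
  classical
  set b : ℕ := (bp:ℕ) with hbdef
  set a : ℕ := foldChromatic G b with hadef
  have hb1 : 1 ≤ b := bp.pos
  have hba : b ≤ a := le_foldChromatic G b
  have hbR : (0:ℝ) < b := by exact_mod_cast bp.pos
  have haR : (0:ℝ) < a := lt_of_lt_of_le hbR (by exact_mod_cast hba)
  set q : ℝ := (a:ℝ)/(b:ℝ) with hq
  have hq1 : 1 ≤ q := by rw [hq, le_div_iff₀ hbR, one_mul]; exact_mod_cast hba
  set c : ℝ := Real.log (Fintype.card V) + 1 with hc
  have hlogV : 0 ≤ Real.log (Fintype.card V) :=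
    Real.log_nonneg (by exact_mod_cast Fintype.card_pos)
  have hc1 : 1 ≤ c := by rw [hc]; linarith
  set T : ℕ := ⌈((n:ℝ) * c) * q ^ n⌉₊ with hT
  have hTlb : ((n:ℝ) * c) * q ^ n ≤ (T:ℝ) := Nat.le_ceil _
  obtain ⟨cp, hcardp, hdisjp⟩ := orPow_fold (exists_foldColoring G b) n
  set S : Fin (a ^ n) → Finset (Fin n → V) := fun j => univ.filter (fun x => j ∈ cp x) with hS
  have hind : ∀ j, ∀ x ∈ S j, ∀ y ∈ S j, ¬ (orPow G n).Adj x y := by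
    intro j x hx y hy hadj
    rw [hS] at hx hy
    rw [Finset.mem_filter] at hx hy
    exact Finset.disjoint_left.1 (hdisjp x y hadj) hx.2 hy.2
  have hcov : ∀ x, b ^ n ≤ (univ.filter fun j => x ∈ S j).card := by
    intro x
    have hsub : cp x ⊆ univ.filter (fun j => x ∈ S j) := by
      intro j hj
      rw [Finset.mem_filter]
      refine ⟨Finset.mem_univ _, ?_⟩
      rw [hS, Finset.mem_filter]
      exact ⟨Finset.mem_univ _, hj⟩
    calc b ^ n = (cp x).card := (hcardp x).symm
      _ ≤ _ := Finset.card_le_card hsub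
  have hbnpos : 0 < b ^ n := pow_pos (by omega) n
  have hnum : Fintype.card (Fin n → V) * (a ^ n - b ^ n) ^ T < (a ^ n) ^ T := by
    have hcardfun : Fintype.card (Fin n → V) = Fintype.card V ^ n := by
      rw [Fintype.card_fun, Fintype.card_fin]
    have hbnan : b ^ n ≤ a ^ n := Nat.pow_le_pow_left hba n
    rw [hcardfun]
    have hreal : ((Fintype.card V : ℝ)) ^ n * ((a:ℝ) ^ n - (b:ℝ) ^ n) ^ T < ((a:ℝ) ^ n) ^ T := by
      set r : ℝ := ((b:ℝ)/(a:ℝ)) ^ n with hr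
      have hr0 : 0 < r := by positivity
      have hr1 : r ≤ 1 := pow_le_one₀ (by positivity) ((div_le_one haR).2 (by exact_mod_cast hba))
      have hrq : r * q ^ n = 1 := by
        rw [hr, hq, ← mul_pow,
          show ((b:ℝ)/(a:ℝ)) * ((a:ℝ)/(b:ℝ)) = 1 by field_simp, one_pow]
      have haA : (a:ℝ) ^ n - (b:ℝ) ^ n = (a:ℝ) ^ n * (1 - r) := by
        rw [hr]
        rw [div_pow, mul_sub, mul_one, mul_div_assoc', mul_div_cancel_left₀ _ (pow_pos haR n).ne']
      have h2 : (1 - r) ^ T ≤ Real.exp (-(r * T)) := by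
        have h21 : 1 - r ≤ Real.exp (-r) := by
          have := Real.add_one_le_exp (-r)
          linarith
        calc (1 - r) ^ T ≤ Real.exp (-r) ^ T := pow_le_pow_left₀ (by linarith) h21 T
          _ = Real.exp (-(r * T)) := by
              rw [← Real.exp_nat_mul]
              ring_nf
      have h3 : ((Fintype.card V : ℝ)) ^ n < Real.exp (r * T) := by
        have hcpos : (0:ℝ) < (Fintype.card V : ℝ) := by exact_mod_cast Fintype.card_pos
        have hloglt : Real.log (((Fintype.card V : ℝ)) ^ n) < r * T := by
          rw [Real.log_pow]
          have h31 : r * (((n:ℝ) * c) * q ^ n) ≤ r * T := mul_le_mul_of_nonneg_left hTlb hr0.le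
          have h32 : r * (((n:ℝ) * c) * q ^ n) = (n:ℝ) * c := by
            rw [show r * (((n:ℝ)*c) * q^n) = ((n:ℝ)*c) * (r * q^n) by ring, hrq, mul_one]
          have hnR : (1:ℝ) ≤ (n:ℝ) := by exact_mod_cast hn
          have h33 : (n:ℝ) * Real.log (Fintype.card V) < (n:ℝ) * c := by
            rw [hc]; nlinarith
          rw [h32] at h31
          linarith
        have h5 := Real.exp_lt_exp.2 hloglt
        rwa [Real.exp_log (by positivity)] at h5
      have hApos : (0:ℝ) < ((a:ℝ) ^ n) ^ T := by positivity
      calc ((Fintype.card V : ℝ)) ^ n * ((a:ℝ) ^ n - (b:ℝ) ^ n) ^ T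
          = ((a:ℝ)^n)^T * (((Fintype.card V : ℝ))^n * (1 - r)^T) := by
            rw [haA, mul_pow]; ring
        _ ≤ ((a:ℝ)^n)^T * (((Fintype.card V : ℝ))^n * Real.exp (-(r * T))) := by
            have hNr : (0:ℝ) ≤ ((Fintype.card V : ℝ))^n := by positivity
            have h4 := mul_le_mul_of_nonneg_left h2 hNr
            exact mul_le_mul_of_nonneg_left h4 hApos.le
        _ < ((a:ℝ)^n)^T * 1 := by
            refine mul_lt_mul_of_pos_left ?_ hApos
            have hNrpos : (0:ℝ) < ((Fintype.card V : ℝ))^n := by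
              have : (0:ℝ) < (Fintype.card V : ℝ) := by exact_mod_cast Fintype.card_pos
              positivity
            rw [Real.exp_neg, ← div_eq_mul_inv]
            exact (div_lt_one (Real.exp_pos _)).2 h3
        _ = ((a:ℝ)^n)^T := mul_one _
    have hcast : ((a:ℝ)^n - (b:ℝ)^n) = ((a^n - b^n : ℕ) : ℝ) := by
      push_cast [hbnan]
      ring
    rw [hcast] at hreal
    exact_mod_cast hreal
  refine foldChromatic_le (greedy (orPow G n) hbnpos S hind ?_ hnum)
  intro x
  have h6 := hcov x
  convert h6 using 2
  apply Finset.filter_congr_decidable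

lemma root_le_g (G : SimpleGraph V) (bp : ℕ+) (n : ℕ) (hn : 1 ≤ n) :
    (foldChromatic (orPow G n) 1 : ℝ) ^ ((n:ℝ)⁻¹) ≤
      ((n:ℝ) * (Real.log (Fintype.card V) + 1) + 1) ^ ((n:ℝ)⁻¹) *
        ((foldChromatic G (bp:ℕ) : ℝ) / ((bp:ℕ):ℝ)) := by
  set b : ℕ := (bp:ℕ) with hbdef
  set a : ℕ := foldChromatic G b with hadef
  have hba : b ≤ a := le_foldChromatic G b
  have hbR : (0:ℝ) < b := by exact_mod_cast bp.pos
  set q : ℝ := (a:ℝ)/(b:ℝ) with hq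
  have hq0 : 0 ≤ q := by positivity
  have hq1 : 1 ≤ q := by rw [hq, le_div_iff₀ hbR, one_mul]; exact_mod_cast hba
  set c : ℝ := Real.log (Fintype.card V) + 1 with hc
  have hlogV : 0 ≤ Real.log (Fintype.card V) :=
    Real.log_nonneg (by exact_mod_cast Fintype.card_pos)
  have hc1 : 1 ≤ c := by rw [hc]; linarith
  set T : ℕ := ⌈((n:ℝ) * c) * q ^ n⌉₊ with hT
  have h1 : (foldChromatic (orPow G n) 1 : ℝ) ≤ (T:ℝ) := by
    exact_mod_cast chi_orPow_le_ceil G bp n hn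
  have hqn1 : 1 ≤ q ^ n := one_le_pow₀ hq1
  have h2 : (T:ℝ) ≤ ((n:ℝ) * c + 1) * q ^ n := by
    have h3 := (Nat.ceil_lt_add_one (show (0:ℝ) ≤ ((n:ℝ)*c)*q^n by positivity)).le
    rw [← hT] at h3
    nlinarith
  have h0 : (0:ℝ) ≤ (foldChromatic (orPow G n) 1 : ℝ) := by positivity
  have hinv : (0:ℝ) ≤ (n:ℝ)⁻¹ := by positivity
  have hnne : ((n:ℕ):ℝ) ≠ 0 := Nat.cast_ne_zero.mpr (by omega)
  calc (foldChromatic (orPow G n) 1 : ℝ) ^ ((n:ℝ)⁻¹)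
      ≤ (T:ℝ) ^ ((n:ℝ)⁻¹) := Real.rpow_le_rpow h0 h1 hinv
    _ ≤ (((n:ℝ) * c + 1) * q ^ n) ^ ((n:ℝ)⁻¹) := Real.rpow_le_rpow (by positivity) h2 hinv
    _ = ((n:ℝ) * c + 1) ^ ((n:ℝ)⁻¹) * (q ^ n) ^ ((n:ℝ)⁻¹) :=
        Real.mul_rpow (by positivity) (by positivity)
    _ = ((n:ℝ) * c + 1) ^ ((n:ℝ)⁻¹) * q := by
        rw [← Real.rpow_natCast q n, ← Real.rpow_mul hq0, mul_inv_cancel₀ hnne, Real.rpow_one]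

lemma usubadd (G : SimpleGraph V) :
    Subadditive (fun n => Real.log (foldChromatic (orPow G n) 1)) := by
  intro m n
  have h1 : 1 ≤ foldChromatic (orPow G m) 1 := one_le_chi_one _
  have h2 : 1 ≤ foldChromatic (orPow G n) 1 := one_le_chi_one _
  have h12 : 1 ≤ foldChromatic (orPow G (m + n)) 1 := one_le_chi_one _
  have hmR : (0:ℝ) < (foldChromatic (orPow G m) 1 : ℝ) := by exact_mod_cast h1
  have hnR : (0:ℝ) < (foldChromatic (orPow G n) 1 : ℝ) := by exact_mod_cast h2
  have h12R : (0:ℝ) < (foldChromatic (orPow G (m + n)) 1 : ℝ) := by exact_mod_cast h12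
  have h3 := orPow_submul G m n
  calc Real.log (foldChromatic (orPow G (m + n)) 1)
      ≤ Real.log ((foldChromatic (orPow G m) 1 : ℝ) * (foldChromatic (orPow G n) 1 : ℝ)) := by
        refine Real.log_le_log h12R ?_
        exact_mod_cast h3
    _ = _ := Real.log_mul hmR.ne' hnR.ne'

lemma main_nonempty (G : SimpleGraph V) :
    (⨅ n : ℕ+, (foldChromatic (orPow G (n : ℕ)) 1 : ℝ) ^ (((n : ℕ) : ℝ)⁻¹))
        = fracChromatic G ∧
    Tendsto
      (fun n : ℕ+ => (foldChromatic (orPow G (n : ℕ)) 1 : ℝ) ^ (((n : ℕ) : ℝ)⁻¹))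
      atTop (nhds (fracChromatic G)) := by
  classical
  set u : ℕ → ℝ := fun n => Real.log (foldChromatic (orPow G n) 1) with hu
  have hsub : Subadditive u := usubadd G
  have hbdd : BddBelow (Set.range fun n => u n / n) := by
    refine ⟨0, ?_⟩
    rintro y ⟨n, rfl⟩
    have h1 : 1 ≤ foldChromatic (orPow G n) 1 := one_le_chi_one _
    have h0 : 0 ≤ u n := Real.log_nonneg (by exact_mod_cast h1)
    have : (0:ℝ) ≤ (n:ℝ) := Nat.cast_nonneg n
    positivity
  set L := Real.exp hsub.lim with hL
  set F : ℕ → ℝ := fun n => (foldChromatic (orPow G n) 1 : ℝ) ^ ((n:ℝ)⁻¹) with hF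
  have hFeq : ∀ n : ℕ, 1 ≤ n → F n = Real.exp (u n / n) := by
    intro n hn
    have h1 : (0:ℝ) < (foldChromatic (orPow G n) 1 : ℝ) := by
      exact_mod_cast one_le_chi_one (orPow G n)
    rw [hF]
    simp only []
    rw [Real.rpow_def_of_pos h1, hu, div_eq_mul_inv]
  have htend : Tendsto F atTop (nhds L) := by
    have h1 := hsub.tendsto_lim hbdd
    have h2 := (Real.continuous_exp.tendsto _).comp h1
    refine h2.congr' ?_
    filter_upwards [eventually_ge_atTop 1] with n hn
    rw [Function.comp_apply, hFeq n hn]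
  have hLleF : ∀ n : ℕ, 1 ≤ n → L ≤ F n := by
    intro n hn
    rw [hFeq n hn, hL]
    exact Real.exp_le_exp.2 (hsub.lim_le_div hbdd (by omega))
  have hlow : ∀ n : ℕ, 1 ≤ n → fracChromatic G ≤ F n := fun n hn =>
    fracChromatic_le_root (G := G) n hn
  have hup : ∀ b : ℕ+, L ≤ (foldChromatic G (b:ℕ) : ℝ) / ((b:ℕ):ℝ) := by
    intro b
    set cst := Real.log (Fintype.card V) + 1 with hcst
    have hc0 : 0 ≤ cst := by
      have := Real.log_nonneg (show (1:ℝ) ≤ Fintype.card V by exact_mod_cast Fintype.card_pos)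
      rw [hcst]; linarith
    have hg : Tendsto (fun n : ℕ => ((n:ℝ) * cst + 1) ^ ((n:ℝ)⁻¹) *
        ((foldChromatic G (b:ℕ) : ℝ) / ((b:ℕ):ℝ))) atTop
        (nhds ((foldChromatic G (b:ℕ) : ℝ) / ((b:ℕ):ℝ))) := by
      have h5 := (tendsto_root_linear hc0).mul_const
        ((foldChromatic G (b:ℕ) : ℝ) / ((b:ℕ):ℝ))
      rwa [one_mul] at h5
    refine le_of_tendsto_of_tendsto htend hg ?_
    filter_upwards [eventually_ge_atTop 1] with n hn
    exact root_le_g G b n hn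
  have hL_frac : L = fracChromatic G := by
    have le1 : fracChromatic G ≤ L := by
      refine ge_of_tendsto htend ?_
      filter_upwards [eventually_ge_atTop 1] with n hn
      exact hlow n hn
    have le2 : L ≤ fracChromatic G := le_ciInf hup
    linarith
  have hcast : Tendsto (fun p : ℕ+ => (p:ℕ)) atTop atTop := by
    refine tendsto_atTop_atTop_of_monotone (fun x y h => ?_) (fun n => ⟨⟨n+1, Nat.succ_pos n⟩, ?_⟩)
    · exact_mod_cast h
    · exact Nat.le_succ n
  have htend2 : Tendsto (fun p : ℕ+ => F (p:ℕ)) atTop (nhds L) := htend.comp hcast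
  constructor
  · have hbddF : BddBelow (Set.range fun p : ℕ+ => F (p:ℕ)) := by
      refine ⟨0, ?_⟩
      rintro y ⟨p, rfl⟩
      rw [hF]
      positivity
    have h1 : (⨅ p : ℕ+, F (p:ℕ)) ≤ L :=
      ge_of_tendsto htend2 (Eventually.of_forall (fun p => ciInf_le hbddF p))
    have h2 : L ≤ ⨅ p : ℕ+, F (p:ℕ) := le_ciInf (fun p => hLleF (p:ℕ) p.pos)
    rw [← hL_frac]
    exact le_antisymm h1 h2
  · rw [← hL_frac]
    exact htend2

end Upper

end ChromAux

/-- `lim_{n→∞} χ(G^n)^{1/n} = inf_n χ(G^n)^{1/n} = χ_f(G)`, where `G^n` is the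
n-th OR-power and `χ(H) = χ_1(H)` is the chromatic number. -/
theorem chromatic_orPow_root_tendsto_fracChromatic {V : Type*} [Fintype V]
    (G : SimpleGraph V) :
    (⨅ n : ℕ+, (foldChromatic (orPow G (n : ℕ)) 1 : ℝ) ^ (((n : ℕ) : ℝ)⁻¹))
        = fracChromatic G ∧
    Filter.Tendsto
      (fun n : ℕ+ => (foldChromatic (orPow G (n : ℕ)) 1 : ℝ) ^ (((n : ℕ) : ℝ)⁻¹))
      Filter.atTop (nhds (fracChromatic G)) := by
    classical
  rcases isEmpty_or_nonempty V with hV | hV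
  · have hzero : ∀ m : ℕ, 0 < m → foldChromatic (orPow G m) 1 = 0 := by
      intro m hm
      haveI hempty : IsEmpty (Fin m → V) := ⟨fun f => hV.false (f ⟨0, hm⟩)⟩
      have h1 : HasFoldColoring (orPow G m) 0 1 :=
        ⟨fun x => hempty.elim x, fun v => hempty.elim v, fun v w _ => hempty.elim v⟩
      exact Nat.le_zero.1 (ChromAux.foldChromatic_le h1)
    have hzeroG : ∀ b : ℕ, foldChromatic G b = 0 := by
      intro b
      have h1 : HasFoldColoring G 0 b :=
        ⟨fun v => hV.elim v, fun v => hV.elim v, fun v w _ => hV.elim v⟩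
      exact Nat.le_zero.1 (ChromAux.foldChromatic_le h1)
    have hfrac : fracChromatic G = 0 := by
      rw [fracChromatic]
      have h2 : (fun b : ℕ+ => (foldChromatic G (b:ℕ) : ℝ) / ((b:ℕ):ℝ)) = fun _ => (0:ℝ) := by
        funext b
        rw [hzeroG]
        simp
      rw [h2]
      exact ciInf_const
    have hfun : (fun n : ℕ+ => (foldChromatic (orPow G (n:ℕ)) 1 : ℝ) ^ (((n:ℕ):ℝ)⁻¹))
        = fun _ => (0:ℝ) := by
      funext n
      rw [hzero (n:ℕ) n.pos, Nat.cast_zero]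
      exact Real.zero_rpow (inv_ne_zero (Nat.cast_ne_zero.mpr n.pos.ne'))
    constructor
    · rw [hfun, hfrac]
      exact ciInf_const
    · rw [hfun, hfrac]
      exact tendsto_const_nhds
  · exact ChromAux.main_nonempty G
end

section
/- For any finite graph G and any n ≥ 1, χ(G^n) ≥ χ_f(G)^n, where G^n is the n-th OR-power. -/
open Finset
set_option maxHeartbeats 2000000

lemma frac_nonneg {V : Type*} (G : SimpleGraph V) : 0 ≤ fracChromatic G := by
  apply Real.iInf_nonneg
  intro b
  positivity

lemma frac_le_div {V : Type*} (G : SimpleGraph V) {A B : ℕ} (hB : 1 ≤ B)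
    (h : HasFoldColoring G A B) : fracChromatic G ≤ (A : ℝ) / B := by
  have h1 : fracChromatic G ≤ (foldChromatic G B : ℝ) / B := by
    have hbdd : BddBelow (Set.range fun b : ℕ+ => (foldChromatic G (b : ℕ) : ℝ) / ((b : ℕ) : ℝ)) := by
      refine ⟨0, ?_⟩
      rintro x ⟨b, rfl⟩
      positivity
    exact ciInf_le hbdd ⟨B, hB⟩
  refine h1.trans (div_le_div_of_nonneg_right ?_ ?_)
  · exact Nat.cast_le.mpr (Nat.sInf_le h)
  · exact_mod_cast Nat.zero_le B

/-- building a fold coloring from integer multiplicities on independent sets -/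
lemma lemA {V : Type*} [Fintype V] [DecidableEq V] (G : SimpleGraph V)
    {ι : Type*} [Fintype ι] (J : ι → Finset V)
    (hJ : ∀ i, ∀ x ∈ J i, ∀ y ∈ J i, ¬ G.Adj x y)
    (m : ι → ℕ) (B : ℕ) (hB : 1 ≤ B)
    (hcov : ∀ v, B ≤ ∑ i, if v ∈ J i then m i else 0) :
    fracChromatic G ≤ (∑ i, m i : ℝ) / B := by
  classical
  set A := ∑ i, m i with hA
  rw [← Nat.cast_sum]
  apply frac_le_div G hB
  let T := Σ i : ι, Fin (m i)
  have hcard : Fintype.card T = A := by simp [T, hA, Fintype.card_sigma]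
  let e : T ≃ Fin A := (Fintype.equivFin T).trans (finCongr hcard)
  let c0 : V → Finset T := fun v => univ.filter (fun t => v ∈ J t.1)
  have hc0card : ∀ v, B ≤ (c0 v).card := by
    intro v
    refine (hcov v).trans ?_
    rw [Finset.card_filter]
    apply le_of_eq
    rw [← Finset.univ_sigma_univ, Finset.sum_sigma]
    congr 1
    ext i
    by_cases h : v ∈ J i <;> simp [h]
  choose c1 hc1sub hc1card using fun v => Finset.exists_subset_card_eq (hc0card v)
  refine ⟨fun v => (c1 v).map e.toEmbedding, fun v => by simp [hc1card], ?_⟩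
  intro v w hvw
  rw [Finset.disjoint_map]
  rw [Finset.disjoint_left]
  intro t htv htw
  have h1 := hc1sub v htv
  have h2 := hc1sub w htw
  simp only [c0, Finset.mem_filter] at h1 h2
  exact hJ t.1 v h1.2 w h2.2 hvw

noncomputable def indVec {V : Type*} [DecidableEq V] (I : Finset V) : V → ℝ :=
  fun v => if v ∈ I then 1 else 0

/-- existence of a near-optimal fractional clique (weak dual certificate) -/
lemma lemB {V : Type*} [Fintype V] [DecidableEq V] [Nonempty V] (G : SimpleGraph V) :
    ∃ w : V → ℝ, (∀ v, 0 ≤ w v) ∧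
      (∀ I : Finset V, (∀ a ∈ I, ∀ b ∈ I, ¬ G.Adj a b) → ∑ v ∈ I, w v ≤ 1) ∧
      fracChromatic G ≤ ∑ v, w v := by
  classical
  set N := Fintype.card V with hN
  have hNpos : 0 < N := Fintype.card_pos
  set gen : Set (V → ℝ) := indVec '' {I : Finset V | ∀ a ∈ I, ∀ b ∈ I, ¬ G.Adj a b} with hgenset
  set K : Set (V → ℝ) := convexHull ℝ gen with hK
  set S : Set ℝ := {t | ∃ x ∈ K, ∀ v, t ≤ x v} with hS
  have hgen : ∀ (I : Finset V), (∀ a ∈ I, ∀ b ∈ I, ¬ G.Adj a b) → indVec I ∈ K := by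
    intro I hI
    exact subset_convexHull ℝ gen ⟨I, hI, rfl⟩
  have hbox : ∀ x ∈ K, ∀ v, 0 ≤ x v ∧ x v ≤ 1 := by
    intro x hx
    have hsub : K ⊆ {y : V → ℝ | ∀ v, 0 ≤ y v ∧ y v ≤ 1} := by
      apply convexHull_min
      · rintro y ⟨I, -, rfl⟩ v
        by_cases h : v ∈ I <;> simp [indVec, h]
      · intro y hy z hz a b ha hb hab v
        obtain ⟨h1, h2⟩ := hy v
        obtain ⟨h3, h4⟩ := hz v
        simp only [Pi.add_apply, Pi.smul_apply, smul_eq_mul]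
        constructor
        · positivity
        · nlinarith
    exact hsub hx
  have hSbdd : BddAbove S := by
    refine ⟨1, ?_⟩
    rintro t ⟨x, hxK, hxge⟩
    exact (hxge (Classical.arbitrary V)).trans (hbox x hxK _).2
  have hSmem : (N : ℝ)⁻¹ ∈ S := by
    have hsingle : ∀ v : V, indVec {v} ∈ gen := by
      intro v
      refine ⟨{v}, ?_, rfl⟩
      intro a ha b hb
      simp only [mem_singleton] at ha hb
      subst ha; subst hb
      exact G.irrefl
    have hsum1 : (0:ℝ) < ∑ _v : V, (1:ℝ) := by
      rw [Finset.sum_const, card_univ, nsmul_eq_mul, mul_one]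
      exact_mod_cast hNpos
    have h2 : Finset.univ.centerMass (fun _ : V => (1:ℝ)) (fun v : V => indVec {v})
        ∈ convexHull ℝ gen :=
      Finset.centerMass_mem_convexHull _ (fun i _ => zero_le_one) hsum1
        (fun i _ => hsingle i)
    have heq : Finset.univ.centerMass (fun _ => (1:ℝ)) (fun v : V => indVec {v})
        = fun _ => (N : ℝ)⁻¹ := by
      funext u
      rw [Finset.centerMass]
      simp only [one_smul, smul_eq_mul, Pi.smul_apply, Finset.sum_apply,
        Finset.sum_const, card_univ, nsmul_eq_mul, mul_one]
      have hs : (∑ v : V, indVec {v} u) = 1 := by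
        rw [Finset.sum_eq_single u (fun b _ hb => by simp [indVec, Ne.symm hb]) (by simp)]
        simp [indVec]
      rw [hs, hN, mul_one]
    rw [heq] at h2
    exact ⟨_, h2, fun v => le_refl _⟩
  have hSne : S.Nonempty := ⟨_, hSmem⟩
  set vs := sSup S with hvs
  have hvspos : 0 < vs := by
    have := le_csSup hSbdd hSmem
    have h2 : (0:ℝ) < (N : ℝ)⁻¹ := by positivity
    linarith
  -- Claim 1
  have claim1 : ∀ t ∈ S, 0 < t → fracChromatic G ≤ 1 / t := by
    intro t htS htpos
    obtain ⟨x, hxK, hxge⟩ := htS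
    rw [hK, _root_.convexHull_eq] at hxK
    obtain ⟨ι', tt, wt, z, hwt0, hwt1, hzmem, hwtx⟩ := hxK
    set ι : Type _ := {i : ι' // i ∈ tt} with hι
    have hmem2 : ∀ y : ι, z y.1 ∈ gen := fun y => hzmem y.1 y.2
    choose J hJind hJz using hmem2
    have hxval : ∀ v, x v = ∑ y : ι, if v ∈ J y then wt y.1 else 0 := by
      intro v
      rw [← hwtx, Finset.centerMass_eq_of_sum_1 _ _ hwt1, Finset.sum_apply,
        ← Finset.sum_coe_sort tt (fun i => (wt i • z i) v)]
      refine Finset.sum_congr rfl ?_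
      rintro y -
      show (wt y.1 • z y.1) v = _
      rw [← hJz y]
      by_cases h : v ∈ J y
      · simp [indVec, h]
      · simp [indVec, h]
    rw [div_eq_inv_mul, mul_one]
    apply le_of_forall_pos_le_add
    intro ε hε
    set c : ℝ := (tt.card : ℝ) with hc
    have hcnn : 0 ≤ c := by positivity
    obtain ⟨d, hd⟩ := exists_nat_gt (max (1:ℝ) (c / (t * ε)))
    have hd1 : (1:ℝ) < d := lt_of_le_of_lt (le_max_left _ _) hd
    have hdpos : (0:ℝ) < d := by linarith
    have hdc : c / (t * ε) < d := lt_of_le_of_lt (le_max_right _ _) hd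
    set m : ι → ℕ := fun y => ⌈wt y.1 * d⌉₊ with hm
    set B : ℕ := ⌈t * d⌉₊ with hB
    have hBpos : 1 ≤ B := Nat.one_le_ceil_iff.mpr (by positivity)
    have hwt0' : ∀ y : ι, 0 ≤ wt y.1 := fun y => hwt0 y.1 y.2
    have hcov : ∀ v, B ≤ ∑ y : ι, if v ∈ J y then m y else 0 := by
      intro v
      rw [hB]
      apply Nat.ceil_le.mpr
      calc t * d ≤ x v * d := by nlinarith [hxge v]
        _ = ∑ y : ι, (if v ∈ J y then wt y.1 else 0) * d := by
            rw [hxval v, Finset.sum_mul]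
        _ ≤ ∑ y : ι, (if v ∈ J y then (m y : ℝ) else 0) := by
            apply Finset.sum_le_sum
            intro y _
            by_cases h : v ∈ J y
            · simpa [h] using Nat.le_ceil (wt y.1 * d)
            · simp [h]
        _ = ((∑ y : ι, if v ∈ J y then m y else 0 : ℕ) : ℝ) := by
            push_cast
            refine Finset.sum_congr rfl ?_
            intro y _
            by_cases h : v ∈ J y <;> simp [h]
    have key := lemA G J hJind m B hBpos hcov
    refine key.trans ?_
    have hsm : (∑ y : ι, m y : ℝ) ≤ d + c := by
      push_cast
      have hmle : ∀ y : ι, (m y : ℝ) ≤ wt y.1 * d + 1 := by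
        intro y
        exact le_of_lt (Nat.ceil_lt_add_one (mul_nonneg (hwt0' y) (le_of_lt hdpos)))
      calc (∑ y : ι, (m y:ℝ)) ≤ ∑ y : ι, (wt y.1 * d + 1) :=
            Finset.sum_le_sum fun y _ => hmle y
        _ = (∑ y : ι, wt y.1) * d + Fintype.card ι := by
            rw [Finset.sum_add_distrib, ← Finset.sum_mul]
            simp
        _ = d + c := by
            have h1 : ∑ y : ι, wt y.1 = 1 := by
              rw [Finset.sum_coe_sort tt wt]
              exact hwt1
            rw [h1, one_mul, hc]
            congr 1
            simp [ι, Fintype.card_coe]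
    have hBge : t * d ≤ (B : ℝ) := Nat.le_ceil _
    have hBpos' : (0:ℝ) < B := lt_of_lt_of_le (by positivity) hBge
    have hden : (0:ℝ) < t * d := mul_pos htpos hdpos
    have step1 : (∑ y : ι, m y : ℝ) / B ≤ (d + c) / (t * d) :=
      div_le_div₀ (by linarith) hsm hden hBge
    have step2 : ((d:ℝ) + c) / (t * d) = t⁻¹ + c / (t * d) := by
      rw [add_div, mul_comm t (d:ℝ), div_mul_eq_div_div, div_self (ne_of_gt hdpos),
        one_div, mul_comm (d:ℝ) t]
    have hfin : c / (t * d) ≤ ε := by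
      rw [div_le_iff₀ hden]
      have h2 := (div_lt_iff₀ (mul_pos htpos hε)).mp hdc
      nlinarith
    rw [step2] at step1
    linarith
  -- fracChromatic G ≤ 1 / vs
  have hfrac_le : fracChromatic G ≤ 1 / vs := by
    by_contra hcon
    push_neg at hcon
    have hfpos : 0 < fracChromatic G := lt_trans (by positivity) hcon
    have h1 : 1 / fracChromatic G < vs := by
      rw [div_lt_iff₀ hfpos]
      rw [div_lt_iff₀ hvspos] at hcon
      nlinarith
    obtain ⟨t, htS, htgt⟩ := exists_lt_of_lt_csSup hSne h1
    have htpos : 0 < t := lt_trans (by positivity) htgt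
    have h2 := claim1 t htS htpos
    have h3 : 1 / t < fracChromatic G := by
      rw [div_lt_iff₀ htpos]
      rw [div_lt_iff₀ hfpos] at htgt
      nlinarith
    linarith
  -- separation
  have hKconv : Convex ℝ K := convex_convexHull ℝ _
  set O : Set (V → ℝ) := Set.univ.pi (fun _ => Set.Ioi vs) with hO
  have hOopen : IsOpen O := isOpen_set_pi Set.finite_univ (fun i _ => isOpen_Ioi)
  have hOconv : Convex ℝ O := convex_pi (fun i _ => convex_Ioi vs)
  have hOmem : ∀ x : V → ℝ, (∀ v, vs < x v) → x ∈ O := by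
    intro x h
    rw [hO, Set.mem_pi]
    exact fun v _ => h v
  have hdisj : Disjoint O K := by
    rw [Set.disjoint_left]
    intro x hxO hxK
    have hxgt : ∀ v, vs < x v := fun v => (Set.mem_pi.mp hxO) v (Set.mem_univ v)
    obtain ⟨v0, -, hv0⟩ :=
      Finset.exists_mem_eq_inf' (univ_nonempty : (univ : Finset V).Nonempty) x
    have htS : Finset.univ.inf' univ_nonempty x ∈ S :=
      ⟨x, hxK, fun v => Finset.inf'_le _ (mem_univ v)⟩
    have hle := le_csSup hSbdd htS
    rw [hv0] at hle
    exact absurd hle (not_le.mpr (hxgt v0))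
  obtain ⟨f, u, hfO, hfK⟩ := geometric_hahn_banach_open hOconv hOopen hKconv hdisj
  set cf : V → ℝ := fun v => f (Pi.single v 1 : V → ℝ) with hcf
  have hflin : ∀ x : V → ℝ, f x = ∑ v, x v * cf v := by
    intro x
    have h1 : ∀ v : V, x v • (Pi.single v 1 : V → ℝ) = (Pi.single v (x v) : V → ℝ) := by
      intro v
      funext w
      by_cases h : w = v
      · subst h; simp
      · simp [Pi.single_apply, h]
    have hx : x = ∑ v, x v • (Pi.single v 1 : V → ℝ) := by
      calc x = ∑ v, (Pi.single v (x v) : V → ℝ) := (Finset.univ_sum_single x).symm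
        _ = ∑ v, x v • (Pi.single v 1 : V → ℝ) := by
            refine Finset.sum_congr rfl ?_
            intro v _
            exact (h1 v).symm
    calc f x = f (∑ v, x v • (Pi.single v 1 : V → ℝ)) := by rw [← hx]
      _ = ∑ v, f (x v • (Pi.single v 1 : V → ℝ)) := map_sum f _ _
      _ = ∑ v, x v * cf v := by
          refine Finset.sum_congr rfl ?_
          intro v _
          rw [map_smul]
          simp [cf]
  have hfconst : ∀ r : ℝ, f (fun _ => r) = r * ∑ v, cf v := by
    intro r
    rw [hflin, Finset.mul_sum]
  have hcstO : ∀ r : ℝ, vs < r → (fun _ => r : V → ℝ) ∈ O := fun r hr =>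
    hOmem _ (fun _ => hr)
  have hcle : ∀ v, cf v ≤ 0 := by
    intro v
    by_contra hcp
    push_neg at hcp
    have hy1 : (fun _ => vs + 1 : V → ℝ) ∈ O := hcstO _ (by linarith)
    have hfy1 : f (fun _ => vs + 1) < u := hfO _ hy1
    set s := (u - f (fun _ => vs + 1)) / cf v with hsdef
    have hspos : 0 < s := div_pos (by linarith) hcp
    have hzO : ((fun _ => vs + 1 : V → ℝ) + s • (Pi.single v 1 : V → ℝ)) ∈ O := by
      apply hOmem
      intro w
      by_cases h : w = v
      · subst h
        simp only [Pi.add_apply, Pi.smul_apply, Pi.single_eq_same, smul_eq_mul, mul_one]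
        linarith
      · simp only [Pi.add_apply, Pi.smul_apply, Pi.single_apply, h, if_false,
          smul_eq_mul, mul_zero, add_zero]
        linarith
    have h2 : f ((fun _ => vs + 1 : V → ℝ) + s • (Pi.single v 1 : V → ℝ)) < u := hfO _ hzO
    rw [map_add, map_smul] at h2
    have h3 : s * cf v = u - f (fun _ => vs + 1) := div_mul_cancel₀ _ (ne_of_gt hcp)
    simp only [smul_eq_mul] at h2
    have h4 : cf v = f (Pi.single v 1 : V → ℝ) := rfl
    rw [← h4] at h2
    linarith
  set p : V → ℝ := fun v => -cf v with hp
  have hpnn : ∀ v, 0 ≤ p v := fun v => neg_nonneg.mpr (hcle v)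
  have hsum_cf : ∑ v, cf v = - ∑ v, p v := by
    simp [hp]
  have hppos : 0 < ∑ v, p v := by
    rcases lt_or_ge 0 (∑ v, p v) with h | h
    · exact h
    · exfalso
      have hz : ∀ v ∈ (univ : Finset V), p v = 0 :=
        (Finset.sum_eq_zero_iff_of_nonneg (fun v _ => hpnn v)).mp
          (le_antisymm h (Finset.sum_nonneg fun v _ => hpnn v))
      have hcz : ∀ v, cf v = 0 := by
        intro v
        have := hz v (mem_univ v)
        simp only [hp, neg_eq_zero] at this
        exact this
      have h1 : f (fun _ => vs + 1) < u := hfO _ (hcstO _ (by linarith))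
      rw [hfconst] at h1
      have h2 : u ≤ f (indVec (∅ : Finset V)) := hfK _ (hgen ∅ (by simp))
      rw [hflin] at h2
      simp only [hcz, mul_zero, Finset.sum_const_zero] at h1 h2
      linarith
  have hIbound : ∀ I : Finset V, (∀ a ∈ I, ∀ b ∈ I, ¬ G.Adj a b) →
      ∑ v ∈ I, p v ≤ vs * ∑ v, p v := by
    intro I hI
    have h1 : u ≤ f (indVec I) := hfK _ (hgen I hI)
    have h2 : f (indVec I) = - ∑ v ∈ I, p v := by
      rw [hflin]
      have e0 : ∀ v : V, indVec I v * cf v = if v ∈ I then cf v else 0 := by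
        intro v; by_cases h : v ∈ I <;> simp [indVec, h]
      rw [Finset.sum_congr rfl (fun v _ => e0 v), Finset.sum_ite_mem, Finset.univ_inter]
      simp [hp]
    apply le_of_forall_pos_le_add
    intro ε hε
    set s := ε / ∑ v, p v with hsdef
    have hspos : 0 < s := div_pos hε hppos
    have h3 : f (fun _ => vs + s) < u := hfO _ (hcstO _ (by linarith))
    rw [hfconst, hsum_cf] at h3
    have h5 : s * ∑ v, p v = ε := div_mul_cancel₀ _ (ne_of_gt hppos)
    nlinarith [h1, h2, h3]
  refine ⟨fun v => p v / (vs * ∑ v, p v), ?_, ?_, ?_⟩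
  · intro v
    have := hpnn v
    positivity
  · intro I hI
    rw [← Finset.sum_div]
    rw [div_le_one (by positivity)]
    exact hIbound I hI
  · rw [← Finset.sum_div]
    have : (∑ v, p v) / (vs * ∑ v, p v) = 1 / vs := by
      rw [mul_comm, div_mul_eq_div_div, div_self (ne_of_gt hppos)]
    rw [this]
    exact hfrac_le

/-- `χ(G^n) ≥ χ_f(G)^n` for the n-th OR-power, `n ≥ 1`. -/
theorem chromatic_orPow_ge_fracChromatic_pow {V : Type*} [Fintype V]
    (G : SimpleGraph V) (n : ℕ) (hn : 1 ≤ n) :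
    fracChromatic G ^ n ≤ (foldChromatic (orPow G n) 1 : ℝ) := by
  classical
  rcases isEmpty_or_nonempty V with hV | hV
  · have h0 : ∀ b : ℕ, HasFoldColoring G 0 b :=
      fun b => ⟨fun v => isEmptyElim v, fun v => isEmptyElim v, fun v => isEmptyElim v⟩
    have hf : ∀ b : ℕ, foldChromatic G b = 0 :=
      fun b => Nat.eq_zero_of_le_zero (Nat.sInf_le (h0 b))
    have hz : fracChromatic G = 0 := by
      have : ∀ b : ℕ+, (foldChromatic G (b : ℕ) : ℝ) / ((b : ℕ) : ℝ) = 0 := by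
        intro b
        rw [hf]
        simp
      rw [fracChromatic]
      rw [funext this]
      exact ciInf_const
    rw [hz, zero_pow (by omega : n ≠ 0)]
    positivity
  · obtain ⟨w, hw0, hwI, hwfrac⟩ := lemB G
    have hane : {A | HasFoldColoring (orPow G n) A 1}.Nonempty := by
      refine ⟨Fintype.card (Fin n → V),
        fun x => {Fintype.equivFin (Fin n → V) x}, fun x => by simp, ?_⟩
      intro x y hxy
      rw [Finset.disjoint_singleton]
      intro h
      obtain ⟨i, hi⟩ := hxy
      have hxeq : x = y := (Fintype.equivFin (Fin n → V)).injective h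
      exact G.irrefl (hxeq ▸ hi)
    set a := foldChromatic (orPow G n) 1 with ha
    obtain ⟨c, hc1, hcd⟩ : HasFoldColoring (orPow G n) a 1 := Nat.sInf_mem hane
    have hcne : ∀ x, (c x).Nonempty := by
      intro x
      rw [← Finset.card_pos, hc1]
      exact one_pos
    set col : (Fin n → V) → Fin a := fun x => (c x).min' (hcne x) with hcol
    have hcolmem : ∀ x, col x ∈ c x := fun x => Finset.min'_mem _ _
    have hproper : ∀ x y, (orPow G n).Adj x y → col x ≠ col y := by
      intro x y hxy h
      have := Finset.disjoint_left.mp (hcd x y hxy) (hcolmem x)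
      rw [h] at this
      exact this (hcolmem y)
    have step1 : fracChromatic G ^ n ≤ (∑ v, w v) ^ n :=
      pow_le_pow_left₀ (frac_nonneg G) hwfrac n
    refine step1.trans ?_
    have step2 : (∑ v, w v) ^ n = ∑ x : Fin n → V, ∏ i, w (x i) := by
      rw [← Fintype.piFinset_univ]
      rw [← Finset.prod_univ_sum (fun _ : Fin n => (Finset.univ : Finset V))
        (fun _ v => w v)]
      rw [Finset.prod_const, Finset.card_univ, Fintype.card_fin]
    rw [step2]
    have step3 : ∑ x : Fin n → V, ∏ i, w (x i)
        = ∑ k : Fin a, ∑ x ∈ Finset.univ.filter (fun x => col x = k), ∏ i, w (x i) :=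
      (Finset.sum_fiberwise Finset.univ col (fun x => ∏ i, w (x i))).symm
    rw [step3]
    have step4 : ∀ k : Fin a,
        ∑ x ∈ Finset.univ.filter (fun x => col x = k), ∏ i, w (x i) ≤ 1 := by
      intro k
      set C := Finset.univ.filter (fun x => col x = k) with hC
      set proj : Fin n → Finset V := fun i => C.image (fun x => x i) with hproj
      have hsub : C ⊆ Fintype.piFinset proj := by
        intro x hx
        rw [Fintype.mem_piFinset]
        exact fun i => Finset.mem_image_of_mem _ hx
      calc ∑ x ∈ C, ∏ i, w (x i)
          ≤ ∑ x ∈ Fintype.piFinset proj, ∏ i, w (x i) :=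
            Finset.sum_le_sum_of_subset_of_nonneg hsub
              (fun x _ _ => Finset.prod_nonneg fun i _ => hw0 _)
        _ = ∏ i, ∑ v ∈ proj i, w v := (Finset.prod_univ_sum proj (fun _ v => w v)).symm
        _ ≤ 1 := by
            apply Finset.prod_le_one
            · intro i _
              exact Finset.sum_nonneg fun v _ => hw0 v
            · intro i _
              apply hwI
              intro p hp q hq hadj
              rw [hproj] at hp hq
              obtain ⟨x, hxC, hxp⟩ := Finset.mem_image.mp hp
              obtain ⟨y, hyC, hyq⟩ := Finset.mem_image.mp hq
              have hadj' : (orPow G n).Adj x y := ⟨i, by rw [hxp, hyq]; exact hadj⟩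
              have hx' := (Finset.mem_filter.mp hxC).2
              have hy' := (Finset.mem_filter.mp hyC).2
              exact hproper x y hadj' (hx'.trans hy'.symm)
    calc ∑ k : Fin a, ∑ x ∈ Finset.univ.filter (fun x => col x = k), ∏ i, w (x i)
        ≤ ∑ _k : Fin a, (1:ℝ) := Finset.sum_le_sum fun k _ => step4 k
      _ = a := by simp
end
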